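/- arXiv:2311.02263 — 3 statements merged into one kernel-verified Lean document; each statement's English description precedes it below -/
import Mathlib

section
/- (Expander mixing lemma for pseudoexpectations) Let n, d ≥ 1, q ≥ 2, λ ≥ 0, let σ : Fin n × Fin d ≃ Fin n × Fin d be a bijection specifying a d-regular bipartite graph that is λ-mixing, let t ≥ 2d be even, and let Ẽ be a degree-t pseudoexpectation over the variables {Z_{e,j} : e ∈ Fin n × Fin d, j ∈ Fin q}. For every ℓ ∈ Fin n let X_ℓ = Σ_{α : Fin d → Fin q} x_ℓ(α)·Z_{N_L(ℓ),α} and for every r ∈ Fin n let Y_r = Σ_{β : Fin d → Fin q} y_r(β)·Z_{N_R(r),β}, with arbitrary real coefficients x_ℓ(α), y_r(β). Then |𝔼_{(ℓ,i) ∈ Fin n × Fin d} Ẽ[X_ℓ · Y_{fst(σ(ℓ,i))}] − 𝔼_{ℓ ∈ Fin n} 𝔼_{r ∈ Fin n} Ẽ[X_ℓ · Y_r]| ≤ λ · sqrt(𝔼_ℓ Ẽ[X_ℓ²]) · sqrt(𝔼_r Ẽ[Y_r²]). -/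
/-!
A nonnegative-on-squares functional makes the Gram matrix `(Ẽ[Pᵢ Pⱼ])` of any finite family of
low-degree polynomials positive semidefinite, so it factors as `BᵀB`: there are real vectors
`uᵢ` with `Ẽ[Pᵢ Pⱼ] = ⟪uᵢ, uⱼ⟫`. The mixing inequality for real-valued functions, applied to
each coordinate of these vectors and summed with Cauchy–Schwarz, then gives the same inequality
for pseudoexpectations.
-/

open MvPolynomial

/-- A `d`-regular bipartite graph on left/right vertex sets `Fin n` with edge set
`Fin n × Fin d` is `λ`-mixing if the expander mixing inequality holds for all
real-valued functions on the two sides. -/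
def IsMixing (n d : ℕ) (σ : Fin n × Fin d ≃ Fin n × Fin d) (lam : ℝ) : Prop :=
  ∀ F G : Fin n → ℝ,
    |(∑ e : Fin n × Fin d, F e.1 * G (σ e).1) / ((n : ℝ) * d)
        - ((∑ ℓ, F ℓ) / (n : ℝ)) * ((∑ r, G r) / (n : ℝ))|
      ≤ lam * Real.sqrt ((∑ ℓ, F ℓ ^ 2) / (n : ℝ)) * Real.sqrt ((∑ r, G r ^ 2) / (n : ℝ))

/-- A degree-`t` pseudoexpectation over the variables `Z_{e,j}`, `e ∈ Fin n × Fin d`,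
`j ∈ Fin q`. -/
def IsPseudoExpectation (n d q t : ℕ)
    (E : MvPolynomial ((Fin n × Fin d) × Fin q) ℝ →ₗ[ℝ] ℝ) : Prop :=
  E 1 = 1 ∧
  (∀ p : MvPolynomial ((Fin n × Fin d) × Fin q) ℝ, p.totalDegree ≤ t / 2 → 0 ≤ E (p ^ 2)) ∧
  (∀ (e : Fin n × Fin d) (j : Fin q) (p : MvPolynomial ((Fin n × Fin d) × Fin q) ℝ),
      p.totalDegree + 2 ≤ t → E (p * (X (e, j) ^ 2 - X (e, j))) = 0) ∧
  (∀ (e : Fin n × Fin d) (p : MvPolynomial ((Fin n × Fin d) × Fin q) ℝ),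
      p.totalDegree + 1 ≤ t → E (p * ((∑ j : Fin q, X (e, j)) - 1)) = 0)

/-- `Z_{N_L(ℓ), α} = ∏_{i} Z_{(ℓ,i), α i}`. -/
noncomputable def ZL (n d q : ℕ) (ℓ : Fin n) (α : Fin d → Fin q) :
    MvPolynomial ((Fin n × Fin d) × Fin q) ℝ :=
  ∏ i : Fin d, X ((ℓ, i), α i)

/-- `Z_{N_R(r), β} = ∏_{j} Z_{σ⁻¹(r,j), β j}`. -/
noncomputable def ZR (n d q : ℕ) (σ : Fin n × Fin d ≃ Fin n × Fin d)
    (r : Fin n) (β : Fin d → Fin q) :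
    MvPolynomial ((Fin n × Fin d) × Fin q) ℝ :=
  ∏ j : Fin d, X (σ.symm (r, j), β j)

theorem MvPolynomial.totalDegree_sum_smul_prod_X_le {R σ ι β : Type*} [CommSemiring R]
    [Fintype ι] (s : Finset β) (c : β → R) (g : β → ι → σ) :
    (∑ b ∈ s, c b • ∏ i, X (g b i) : MvPolynomial σ R).totalDegree ≤ Fintype.card ι := by
  refine totalDegree_finsetSum_le fun b _ => (totalDegree_smul_le _ _).trans ?_
  refine (totalDegree_finsetProd _ _).trans ?_
  calc ∑ i, (X (g b i) : MvPolynomial σ R).totalDegree ≤ ∑ _i : ι, 1 :=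
        Finset.sum_le_sum fun i _ => (totalDegree_monomial_le _ _).trans (by simp)
    _ = Fintype.card ι := by simp

theorem LinearMap.exists_dotProduct_eq_of_sq_nonneg {A ι : Type*} [CommSemiring A]
    [Algebra ℝ A] [Fintype ι] (E : A →ₗ[ℝ] ℝ) (S : Submodule ℝ A)
    (hS : ∀ p ∈ S, 0 ≤ E (p ^ 2)) (f : ι → A) (hf : ∀ i, f i ∈ S) :
    ∃ u : ι → ι → ℝ, ∀ i j, E (f i * f j) = u i ⬝ᵥ u j := by
  classical
  have hG : (Matrix.of fun i j => E (f i * f j)).PosSemidef := by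
    refine .of_dotProduct_mulVec_nonneg ?_ fun c => ?_
    · ext i j
      simp [mul_comm]
    · have hc := hS _ (S.sum_mem (t := Finset.univ) fun i _ => S.smul_mem (c i) (hf i))
      refine hc.trans_eq ?_
      rw [sq, Finset.sum_mul_sum]
      simp only [map_sum, smul_mul_smul_comm, map_smul, smul_eq_mul, dotProduct, Matrix.mulVec,
        Matrix.of_apply, Finset.mul_sum, star_trivial]
      exact Finset.sum_congr rfl fun i _ => Finset.sum_congr rfl fun j _ => by ring
  open scoped MatrixOrder in
  obtain ⟨B, hB⟩ := CStarAlgebra.nonneg_iff_eq_star_mul_self.mp hG.nonneg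
  refine ⟨fun i k => B k i, fun i j => ?_⟩
  simpa [Matrix.mul_apply, dotProduct] using congrFun (congrFun hB i) j

namespace IsMixing

variable {n d : ℕ} {σ : Fin n × Fin d ≃ Fin n × Fin d} {lam : ℝ}

theorem abs_sub_le_dotProduct (hmix : IsMixing n d σ lam) (hlam : 0 ≤ lam) {κ : Type*}
    [Fintype κ] (u v : Fin n → κ → ℝ) :
    |(∑ e : Fin n × Fin d, u e.1 ⬝ᵥ v (σ e).1) / ((n : ℝ) * d)
        - (∑ ℓ, ∑ r, u ℓ ⬝ᵥ v r) / ((n : ℝ) * n)|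
      ≤ lam * √((∑ ℓ, u ℓ ⬝ᵥ u ℓ) / n) * √((∑ r, v r ⬝ᵥ v r) / n) := by
  set U : κ → ℝ := fun k => (∑ ℓ, u ℓ k ^ 2) / n
  set V : κ → ℝ := fun k => (∑ r, v r k ^ 2) / n
  calc _ = |∑ k, ((∑ e : Fin n × Fin d, u e.1 k * v (σ e).1 k) / ((n : ℝ) * d)
            - (∑ ℓ, u ℓ k) / n * ((∑ r, v r k) / n))| := by
        simp only [dotProduct, Finset.sum_sub_distrib, ← Finset.sum_div, div_mul_div_comm,
          Finset.sum_mul_sum]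
        rw [Finset.sum_comm (s := Finset.univ), Finset.sum_comm_cycle]
    _ ≤ ∑ k, lam * (√(U k) * √(V k)) :=
        (Finset.abs_sum_le_sum_abs _ _).trans <| Finset.sum_le_sum fun k _ =>
          (mul_assoc lam _ _).symm ▸ hmix (u · k) (v · k)
    _ = lam * ∑ k, √(U k) * √(V k) := (Finset.mul_sum _ _ _).symm
    _ ≤ lam * (√(∑ k, U k) * √(∑ k, V k)) := by
        gcongr
        exact Real.sum_sqrt_mul_sqrt_le _ (fun k => by positivity) (fun k => by positivity)
    _ = _ := by
        simp only [U, V, ← Finset.sum_div, dotProduct, ← sq, mul_assoc]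
        rw [Finset.sum_comm (γ := κ), Finset.sum_comm (γ := κ)]

theorem abs_sub_le_of_sq_nonneg (hmix : IsMixing n d σ lam) (hlam : 0 ≤ lam) {A : Type*}
    [CommSemiring A] [Algebra ℝ A] (E : A →ₗ[ℝ] ℝ) (S : Submodule ℝ A)
    (hS : ∀ p ∈ S, 0 ≤ E (p ^ 2)) (P Q : Fin n → A) (hP : ∀ ℓ, P ℓ ∈ S) (hQ : ∀ r, Q r ∈ S) :
    |(∑ e : Fin n × Fin d, E (P e.1 * Q (σ e).1)) / ((n : ℝ) * d)
        - (∑ ℓ, ∑ r, E (P ℓ * Q r)) / ((n : ℝ) * n)|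
      ≤ lam * √((∑ ℓ, E (P ℓ ^ 2)) / n) * √((∑ r, E (Q r ^ 2)) / n) := by
  obtain ⟨u, hu⟩ :=
    E.exists_dotProduct_eq_of_sq_nonneg S hS (Sum.elim P Q) (Sum.forall.2 ⟨hP, hQ⟩)
  have hPQ : ∀ ℓ r, E (P ℓ * Q r) = u (.inl ℓ) ⬝ᵥ u (.inr r) := fun ℓ r => hu (.inl ℓ) (.inr r)
  have hPP : ∀ ℓ, E (P ℓ ^ 2) = u (.inl ℓ) ⬝ᵥ u (.inl ℓ) := fun ℓ => by
    rw [sq]; exact hu (.inl ℓ) (.inl ℓ)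
  have hQQ : ∀ r, E (Q r ^ 2) = u (.inr r) ⬝ᵥ u (.inr r) := fun r => by
    rw [sq]; exact hu (.inr r) (.inr r)
  simp only [hPQ, hPP, hQQ]
  exact hmix.abs_sub_le_dotProduct hlam (fun ℓ => u (.inl ℓ)) (fun r => u (.inr r))

end IsMixing

theorem eml_pseudoexpectation_general (n d q t : ℕ)
    (lam : ℝ) (hlam : 0 ≤ lam)
    (σ : Fin n × Fin d ≃ Fin n × Fin d) (hmix : IsMixing n d σ lam)
    (htd : 2 * d ≤ t)
    (E : MvPolynomial ((Fin n × Fin d) × Fin q) ℝ →ₗ[ℝ] ℝ)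
    (hE : IsPseudoExpectation n d q t E)
    (x y : Fin n → (Fin d → Fin q) → ℝ) :
    |(∑ e : Fin n × Fin d,
        E ((∑ α : Fin d → Fin q, x e.1 α • ZL n d q e.1 α)
            * (∑ β : Fin d → Fin q, y (σ e).1 β • ZR n d q σ (σ e).1 β))) / ((n : ℝ) * d)
      - (∑ ℓ : Fin n, ∑ r : Fin n,
          E ((∑ α : Fin d → Fin q, x ℓ α • ZL n d q ℓ α)
              * (∑ β : Fin d → Fin q, y r β • ZR n d q σ r β))) / ((n : ℝ) * n)|
      ≤ lam
          * Real.sqrt ((∑ ℓ : Fin n,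
              E ((∑ α : Fin d → Fin q, x ℓ α • ZL n d q ℓ α) ^ 2)) / (n : ℝ))
          * Real.sqrt ((∑ r : Fin n,
              E ((∑ β : Fin d → Fin q, y r β • ZR n d q σ r β) ^ 2)) / (n : ℝ)) := by
  obtain ⟨-, hsq, -, -⟩ := hE
  have hdeg : Fintype.card (Fin d) ≤ t / 2 := by simp only [Fintype.card_fin]; omega
  refine hmix.abs_sub_le_of_sq_nonneg hlam E (restrictTotalDegree _ ℝ (t / 2))
    (fun p hp => hsq p ((mem_restrictTotalDegree _ _ _).1 hp))
    (fun ℓ => ∑ α, x ℓ α • ZL n d q ℓ α) (fun r => ∑ β, y r β • ZR n d q σ r β)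
    (fun ℓ => ?_) (fun r => ?_) <;>
  exact (mem_restrictTotalDegree _ _ _).2 ((totalDegree_sum_smul_prod_X_le _ _ _).trans hdeg)

/-- **Expander mixing lemma for pseudoexpectations.** For `d`-local functions
`X_ℓ = Σ_α x_ℓ(α)·Z_{N_L(ℓ),α}` and `Y_r = Σ_β y_r(β)·Z_{N_R(r),β}`,
`|𝔼_{(ℓ,i)} Ẽ[X_ℓ·Y_{σ(ℓ,i).1}] − 𝔼_ℓ 𝔼_r Ẽ[X_ℓ·Y_r]|
  ≤ λ·sqrt(𝔼_ℓ Ẽ[X_ℓ²])·sqrt(𝔼_r Ẽ[Y_r²])`. -/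
theorem eml_pseudoexpectation (n d q t : ℕ) (hn : 1 ≤ n) (hd : 1 ≤ d) (hq : 2 ≤ q)
    (lam : ℝ) (hlam : 0 ≤ lam)
    (σ : Fin n × Fin d ≃ Fin n × Fin d) (hmix : IsMixing n d σ lam)
    (ht : Even t) (htd : 2 * d ≤ t)
    (E : MvPolynomial ((Fin n × Fin d) × Fin q) ℝ →ₗ[ℝ] ℝ)
    (hE : IsPseudoExpectation n d q t E)
    (x y : Fin n → (Fin d → Fin q) → ℝ) :
    |(∑ e : Fin n × Fin d,
        E ((∑ α : Fin d → Fin q, x e.1 α • ZL n d q e.1 α)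
            * (∑ β : Fin d → Fin q, y (σ e).1 β • ZR n d q σ (σ e).1 β))) / ((n : ℝ) * d)
      - (∑ ℓ : Fin n, ∑ r : Fin n,
          E ((∑ α : Fin d → Fin q, x ℓ α • ZL n d q ℓ α)
              * (∑ β : Fin d → Fin q, y r β • ZR n d q σ r β))) / ((n : ℝ) * n)|
      ≤ lam
          * Real.sqrt ((∑ ℓ : Fin n,
              E ((∑ α : Fin d → Fin q, x ℓ α • ZL n d q ℓ α) ^ 2)) / (n : ℝ))
          * Real.sqrt ((∑ r : Fin n,
              E ((∑ β : Fin d → Fin q, y r β • ZR n d q σ r β) ^ 2)) / (n : ℝ)) :=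
  eml_pseudoexpectation_general n d q t lam hlam σ hmix htd E hE x y
end

section
/- (Distance of Tanner code from η-good pseudocodewords) Let n, d ≥ 1, q ≥ 2, let 0 ≤ λ and 0 < δ₀ ≤ 1, with λ ≤ δ₀/3 and 0 ≤ η ≤ δ₀²/9. Let σ : Fin n × Fin d ≃ Fin n × Fin d be a bijection specifying a d-regular bipartite graph that is λ-mixing, let C₀ ⊆ (Fin d → Fin q) be a code in which any two distinct codewords differ in at least δ₀·d coordinates, let t ≥ 4d be even, let Ẽ be a degree-t Tanner pseudocodeword with respect to σ and C₀ that is η-good, and let h : Fin n × Fin d → Fin q be a word all of whose left rows and right rows lie in C₀. Define Δ(Ẽ, h) := 𝔼_{e ∈ Fin n × Fin d}[1 − Ẽ[Z_{e,h(e)}]]. Then either Δ(Ẽ, h) ≤ 3η or Δ(Ẽ, h) ≥ δ₀·(δ₀ − λ) − 3η. -/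
open MvPolynomial

/-- A degree-`t` Tanner pseudocodeword: a degree-`t` pseudoexpectation that in addition
respects the inner-code constraints on every left and every right neighborhood. -/
def IsTannerPseudocodeword (n d q t : ℕ) (σ : Fin n × Fin d ≃ Fin n × Fin d)
    (C₀ : Set (Fin d → Fin q))
    (E : MvPolynomial ((Fin n × Fin d) × Fin q) ℝ →ₗ[ℝ] ℝ) : Prop :=
  IsPseudoExpectation n d q t E ∧
  (∀ (ℓ : Fin n) (α : Fin d → Fin q), α ∉ C₀ →
    ∀ p : MvPolynomial ((Fin n × Fin d) × Fin q) ℝ,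
      p.totalDegree + d ≤ t → E (p * ZL n d q ℓ α) = 0) ∧
  (∀ (r : Fin n) (β : Fin d → Fin q), β ∉ C₀ →
    ∀ p : MvPolynomial ((Fin n × Fin d) × Fin q) ℝ,
      p.totalDegree + d ≤ t → E (p * ZR n d q σ r β) = 0)

/-- `Ẽ` is `η`-good. -/
def IsEtaGood (n d q : ℕ) (σ : Fin n × Fin d ≃ Fin n × Fin d)
    (E : MvPolynomial ((Fin n × Fin d) × Fin q) ℝ →ₗ[ℝ] ℝ) (η : ℝ) : Prop :=
  (∑ ℓ : Fin n, ∑ r : Fin n, ∑ α : Fin d → Fin q, ∑ β : Fin d → Fin q,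
      |E (ZL n d q ℓ α * ZR n d q σ r β) - E (ZL n d q ℓ α) * E (ZR n d q σ r β)|)
    / ((n : ℝ) * n) ≤ η

/-!
Let `x`, `y` be the average pseudo-probabilities `Ẽ[1 - Z_{N(v), h}]` that a left, resp. right,
neighborhood is not assigned its row of `h`. The local distribution `α ↦ Ẽ[Z_{N(v), α}]` is
supported on `C₀`, so every such neighborhood carries at least `δ₀ d` wrong edges on average:
`δ₀ x, δ₀ y ≤ Δ`. Conversely an edge can only be wrong when both of its neighborhoods are,
`1 - Ẽ[Z_{e, h e}] ≤ Ẽ[(1 - Z_L)(1 - Z_R)]`. Writing the pseudo-moment matrix as a Gram matrix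
transfers the mixing inequality to pseudoexpectations, and `η`-goodness replaces the average over
all pairs `(ℓ, r)` by `x y + η`. Altogether `δ₀ √(xy) ≤ Δ ≤ xy + λ √(xy) + η`, a quadratic
constraint on `√(xy)` whose two admissible ranges give the two alternatives.
-/

open Finset

theorem LinearMap.exists_map_mul_eq_sum_mul {A ι : Type*} [CommRing A] [Algebra ℝ A] [Fintype ι]
    (E : A →ₗ[ℝ] ℝ) (S : Submodule ℝ A) (hS : ∀ p ∈ S, 0 ≤ E (p ^ 2))
    (P : ι → A) (hP : ∀ a, P a ∈ S) :
    ∃ (m : ℕ) (v : Fin m → ι → ℝ), ∀ a b, E (P a * P b) = ∑ k, v k a * v k b := by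
  have hpsd : (Matrix.of fun a b => E (P a * P b)).PosSemidef := by
    refine .of_dotProduct_mulVec_nonneg (Matrix.IsHermitian.ext fun a b => by simp [mul_comm])
      fun x => ?_
    have hx := hS (∑ a, x a • P a) (S.sum_mem fun a _ => S.smul_mem (x a) (hP a))
    refine hx.trans_eq ?_
    rw [pow_two, sum_mul_sum]
    simp only [smul_mul_smul_comm, map_sum, map_smul, smul_eq_mul,
      dotProduct, Matrix.mulVec, Matrix.of_apply, mul_sum, Pi.star_apply, star_trivial]
    exact sum_congr rfl fun a _ => sum_congr rfl fun b _ => by ring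
  obtain ⟨m, v, hv⟩ := Matrix.posSemidef_iff_eq_sum_vecMulVec.mp hpsd
  refine ⟨m, v, fun a b => ?_⟩
  simpa [Matrix.sum_apply, Matrix.vecMulVec_apply] using congrFun (congrFun hv a) b

theorem LinearMap.sq_map_mul_le {A : Type*} [CommRing A] [Algebra ℝ A]
    (E : A →ₗ[ℝ] ℝ) (S : Submodule ℝ A) (hS : ∀ p ∈ S, 0 ≤ E (p ^ 2))
    {f g : A} (hf : f ∈ S) (hg : g ∈ S) :
    E (f * g) ^ 2 ≤ E (f ^ 2) * E (g ^ 2) := by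
  obtain ⟨m, v, hv⟩ := E.exists_map_mul_eq_sum_mul S hS ![f, g] (Fin.forall_fin_two.mpr ⟨hf, hg⟩)
  have hfg : E (f * g) = ∑ k, v k 0 * v k 1 := hv 0 1
  have hff : E (f ^ 2) = ∑ k, v k 0 ^ 2 := by simpa [pow_two] using hv 0 0
  have hgg : E (g ^ 2) = ∑ k, v k 1 ^ 2 := by simpa [pow_two] using hv 1 1
  rw [hfg, hff, hgg]
  exact sum_mul_sq_le_sq_mul_sq univ (v · 0) (v · 1)

theorem IsMixing.sum_sub_le {n d : ℕ} {σ : Fin n × Fin d ≃ Fin n × Fin d} {lam : ℝ}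
    (hmix : IsMixing n d σ lam) (hlam : 0 ≤ lam) {κ : Type*} (s : Finset κ)
    (F G : κ → Fin n → ℝ) :
    ∑ k ∈ s, ((∑ e : Fin n × Fin d, F k e.1 * G k (σ e).1) / ((n : ℝ) * d)
        - ((∑ ℓ, F k ℓ) / (n : ℝ)) * ((∑ r, G k r) / (n : ℝ)))
      ≤ lam * √(∑ k ∈ s, (∑ ℓ, F k ℓ ^ 2) / (n : ℝ)) * √(∑ k ∈ s, (∑ r, G k r ^ 2) / (n : ℝ)) := by
  have hnonneg (H : κ → Fin n → ℝ) (k : κ) : 0 ≤ (∑ ℓ, H k ℓ ^ 2) / (n : ℝ) := by positivity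
  calc _ ≤ ∑ k ∈ s, lam * (√((∑ ℓ, F k ℓ ^ 2) / (n : ℝ)) * √((∑ r, G k r ^ 2) / (n : ℝ))) :=
        sum_le_sum fun k _ => (le_abs_self _).trans ((hmix (F k) (G k)).trans_eq (mul_assoc ..))
    _ ≤ _ := by
        rw [← mul_sum, mul_assoc]
        exact mul_le_mul_of_nonneg_left
          (Real.sum_sqrt_mul_sqrt_le s (hnonneg F) (hnonneg G)) hlam

theorem IsMixing.map_sub_le {n d : ℕ} {σ : Fin n × Fin d ≃ Fin n × Fin d} {lam : ℝ}
    (hmix : IsMixing n d σ lam) (hlam : 0 ≤ lam) {A : Type*} [CommRing A] [Algebra ℝ A]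
    (E : A →ₗ[ℝ] ℝ) (S : Submodule ℝ A) (hS : ∀ p ∈ S, 0 ≤ E (p ^ 2))
    (f g : Fin n → A) (hf : ∀ ℓ, f ℓ ∈ S) (hg : ∀ r, g r ∈ S) :
    (∑ e : Fin n × Fin d, E (f e.1 * g (σ e).1)) / ((n : ℝ) * d)
        - (∑ ℓ, ∑ r, E (f ℓ * g r)) / ((n : ℝ) * n)
      ≤ lam * √((∑ ℓ, E (f ℓ ^ 2)) / (n : ℝ)) * √((∑ r, E (g r ^ 2)) / (n : ℝ)) := by
  obtain ⟨m, v, hv⟩ := E.exists_map_mul_eq_sum_mul S hS (Sum.elim f g) (Sum.forall.mpr ⟨hf, hg⟩)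
  have hfg (ℓ r) : E (f ℓ * g r) = ∑ k, v k (.inl ℓ) * v k (.inr r) := hv (.inl ℓ) (.inr r)
  have hff (ℓ) : E (f ℓ ^ 2) = ∑ k, v k (.inl ℓ) ^ 2 := by
    simpa [pow_two] using hv (.inl ℓ) (.inl ℓ)
  have hgg (r) : E (g r ^ 2) = ∑ k, v k (.inr r) ^ 2 := by
    simpa [pow_two] using hv (.inr r) (.inr r)
  convert hmix.sum_sub_le hlam univ (fun k ℓ => v k (.inl ℓ)) (fun k r => v k (.inr r)) using 3
  · simp only [sum_sub_distrib, ← sum_div, hfg, div_mul_div_comm, sum_mul_sum]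
    congr 2
    · exact sum_comm
    · exact (sum_congr rfl fun _ _ => sum_comm).trans sum_comm
  · simp only [hff, ← sum_div]; rw [sum_comm]
  · simp only [hgg, ← sum_div]; rw [sum_comm]

theorem le_three_mul_or_le_of_le_sq_add {δ lam η Δ z : ℝ} (hδ : 0 < δ) (hlam : lam ≤ δ / 3)
    (hη0 : 0 ≤ η) (hη : η ≤ δ ^ 2 / 9) (hz : 0 ≤ z) (hlow : δ * z ≤ Δ)
    (hup : Δ ≤ z ^ 2 + lam * z + η) :
    Δ ≤ 3 * η ∨ δ * (δ - lam) - 3 * η ≤ Δ := by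
  have hs : 0 < δ - lam := by linarith
  rcases le_or_gt ((δ - lam) * z) (2 * η) with hsmall | hlarge
  · left
    have h2η : 2 * η ≤ (δ - lam) * (δ - 2 * lam) := by nlinarith
    have hz' : z + lam ≤ δ - lam := by nlinarith [le_of_mul_le_mul_left (hsmall.trans h2η) hs]
    nlinarith [mul_le_mul_of_nonneg_left hz' hz]
  · right
    -- `z (δ - λ - z) ≤ η` while `(δ - λ) z > 2η`, so `z` lies above the larger root
    have hroot : (δ - lam) * (δ - lam - z) ≤ 2 * η := by
      by_contra! hbig
      have hu : δ - lam - z < (δ - lam) / 2 := by nlinarith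
      nlinarith
    have : δ * (δ - lam - z) ≤ 3 * η := by
      refine le_of_mul_le_mul_right ?_ hs
      nlinarith [mul_le_mul_of_nonneg_left hroot hδ.le]
    linarith

theorem le_three_mul_or_le_of_le_mul_add {δ lam η Δ x y : ℝ} (hδ : 0 < δ) (hlam : lam ≤ δ / 3)
    (hη0 : 0 ≤ η) (hη : η ≤ δ ^ 2 / 9) (hx : 0 ≤ x) (hy : 0 ≤ y)
    (hΔx : δ * x ≤ Δ) (hΔy : δ * y ≤ Δ) (hΔ : Δ ≤ x * y + η + lam * √x * √y) :
    Δ ≤ 3 * η ∨ δ * (δ - lam) - 3 * η ≤ Δ := by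
  have hlow : δ * (√x * √y) ≤ Δ :=
    calc δ * (√x * √y) = √(δ * x) * √(δ * y) := by
          rw [Real.sqrt_mul hδ.le, Real.sqrt_mul hδ.le, mul_mul_mul_comm, Real.mul_self_sqrt hδ.le]
      _ ≤ √Δ * √Δ := mul_le_mul (Real.sqrt_le_sqrt hΔx) (Real.sqrt_le_sqrt hΔy) (by positivity)
          (by positivity)
      _ = Δ := Real.mul_self_sqrt ((mul_nonneg hδ.le hx).trans hΔx)
  refine le_three_mul_or_le_of_le_sq_add hδ hlam hη0 hη (by positivity) hlow ?_
  rwa [mul_pow, Real.sq_sqrt hx, Real.sq_sqrt hy, ← mul_assoc, add_right_comm]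

theorem MvPolynomial.totalDegree_prod_X_le {σ ι R : Type*} [CommSemiring R] [Nontrivial R]
    (s : Finset ι) (w : ι → σ) : (∏ i ∈ s, (X (w i) : MvPolynomial σ R)).totalDegree ≤ #s :=
  (totalDegree_finsetProd s _).trans (by simp)

theorem MvPolynomial.totalDegree_one_sub_prod_X_le {σ ι R : Type*} [CommRing R] [Nontrivial R]
    (s : Finset ι) (w : ι → σ) : (1 - ∏ i ∈ s, (X (w i) : MvPolynomial σ R)).totalDegree ≤ #s :=
  (totalDegree_sub _ _).trans (max_le (by simp) (totalDegree_prod_X_le s w))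

namespace IsPseudoExpectation

variable {n d q t : ℕ} {E : MvPolynomial ((Fin n × Fin d) × Fin q) ℝ →ₗ[ℝ] ℝ}

theorem map_sq_nonneg (hE : IsPseudoExpectation n d q t E) :
    ∀ p ∈ restrictTotalDegree ((Fin n × Fin d) × Fin q) ℝ (t / 2), 0 ≤ E (p ^ 2) :=
  fun p hp => hE.2.1 p ((mem_restrictTotalDegree _ _ _).mp hp)

theorem map_mul_X_sq (hE : IsPseudoExpectation n d q t E) (v : (Fin n × Fin d) × Fin q)
    (p : MvPolynomial ((Fin n × Fin d) × Fin q) ℝ) (hp : p.totalDegree + 2 ≤ t) :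
    E (p * X v ^ 2) = E (p * X v) := by
  have h := hE.2.2.1 v.1 v.2 p hp
  rwa [mul_sub, map_sub, sub_eq_zero] at h

theorem map_mul_prod_X_sq (hE : IsPseudoExpectation n d q t E) {ι : Type*} [DecidableEq ι]
    (w : ι → (Fin n × Fin d) × Fin q) (s : Finset ι)
    (p : MvPolynomial ((Fin n × Fin d) × Fin q) ℝ) (hp : p.totalDegree + 2 * #s ≤ t) :
    E (p * (∏ i ∈ s, X (w i)) ^ 2) = E (p * ∏ i ∈ s, X (w i)) := by
  induction s using Finset.induction generalizing p with
  | empty => simp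
  | insert a s ha ih =>
    rw [card_insert_of_notMem ha] at hp
    have hs := totalDegree_prod_X_le (R := ℝ) s w
    have hdeg : (p * (∏ i ∈ s, X (w i)) ^ 2).totalDegree + 2 ≤ t := by
      have := totalDegree_mul p ((∏ i ∈ s, X (w i)) ^ 2)
      have := totalDegree_pow (∏ i ∈ s, (X (w i) : MvPolynomial _ ℝ)) 2
      nlinarith
    have hdeg' : (p * X (w a)).totalDegree + 2 * #s ≤ t := by
      have := totalDegree_mul p (X (w a))
      rw [totalDegree_X] at this
      omega
    calc E (p * (∏ i ∈ insert a s, X (w i)) ^ 2)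
        = E (p * (∏ i ∈ s, X (w i)) ^ 2 * X (w a) ^ 2) := by rw [prod_insert ha]; congr 1; ring
      _ = E (p * X (w a) * (∏ i ∈ s, X (w i)) ^ 2) := by
          rw [hE.map_mul_X_sq _ _ hdeg]; congr 1; ring
      _ = E (p * ∏ i ∈ insert a s, X (w i)) := by
          rw [ih _ hdeg', prod_insert ha, mul_assoc]

theorem map_one_sub_prod_X_sq (hE : IsPseudoExpectation n d q t E) {ι : Type*} [DecidableEq ι]
    (w : ι → (Fin n × Fin d) × Fin q) (s : Finset ι) (hs : 2 * #s ≤ t) :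
    E ((1 - ∏ i ∈ s, X (w i)) ^ 2) = E (1 - ∏ i ∈ s, X (w i)) := by
  have h := hE.map_mul_prod_X_sq w s 1 (by simpa using hs)
  rw [one_mul, one_mul] at h
  rw [show ∀ m : MvPolynomial _ ℝ, (1 - m) ^ 2 = 1 - m - m + m ^ 2 from fun m => by ring,
    map_add, map_sub, map_sub, h, sub_add_cancel]

theorem map_prod_X_nonneg (hE : IsPseudoExpectation n d q t E) {ι : Type*} [DecidableEq ι]
    (w : ι → (Fin n × Fin d) × Fin q) (s : Finset ι) (hs : 2 * #s ≤ t) :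
    0 ≤ E (∏ i ∈ s, X (w i)) := by
  have h := hE.map_mul_prod_X_sq w s 1 (by simpa using hs)
  rw [one_mul, one_mul] at h
  exact h ▸ hE.2.1 _ ((totalDegree_prod_X_le s w).trans (by omega))

theorem map_mul_X_mul_prod_X_self (hE : IsPseudoExpectation n d q t E) {ι : Type*} [Fintype ι]
    [DecidableEq ι] (w : ι → (Fin n × Fin d) × Fin q) (i₀ : ι)
    (p : MvPolynomial ((Fin n × Fin d) × Fin q) ℝ) (hp : p.totalDegree + Fintype.card ι + 1 ≤ t) :
    E (p * X (w i₀) * ∏ i, X (w i)) = E (p * ∏ i, X (w i)) := by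
  have hcard : #(univ.erase i₀) + 1 = Fintype.card ι := card_erase_add_one (mem_univ i₀)
  have hdeg : (p * ∏ i ∈ univ.erase i₀, X (w i)).totalDegree + 2 ≤ t := by
    have := totalDegree_mul p (∏ i ∈ univ.erase i₀, X (w i))
    have := totalDegree_prod_X_le (R := ℝ) (univ.erase i₀) w
    omega
  rw [← mul_prod_erase univ _ (mem_univ i₀)]
  calc E (p * X (w i₀) * (X (w i₀) * ∏ i ∈ univ.erase i₀, X (w i)))
      = E ((p * ∏ i ∈ univ.erase i₀, X (w i)) * X (w i₀) ^ 2) := by congr 1; ring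
    _ = E (p * (X (w i₀) * ∏ i ∈ univ.erase i₀, X (w i))) := by
        rw [hE.map_mul_X_sq _ _ hdeg]; congr 1; ring

theorem map_mul_X_mul_X_eq_zero (hE : IsPseudoExpectation n d q t E) (ht : 4 ≤ t)
    (e : Fin n × Fin d) {j k : Fin q} (hjk : j ≠ k)
    (p : MvPolynomial ((Fin n × Fin d) × Fin q) ℝ) (hp : p.totalDegree ≤ t / 2) :
    E (p * (X (e, j) * X (e, k))) = 0 := by
  have hpair (k' : Fin q) : E ((X (e, j) * X (e, k')) ^ 2) = E (X (e, j) * X (e, k')) := by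
    simpa [Fin.prod_univ_two] using
      hE.map_mul_prod_X_sq ![(e, j), (e, k')] univ 1 (by simpa using ht)
  have hnonneg (k' : Fin q) : 0 ≤ E (X (e, j) * X (e, k')) := by
    simpa [Fin.prod_univ_two] using
      hE.map_prod_X_nonneg ![(e, j), (e, k')] univ (by simpa using ht)
  -- `∑ k', Ẽ[Z_{e,j} Z_{e,k'}] = Ẽ[Z_{e,j}] = Ẽ[Z_{e,j}²]`, so the off-diagonal terms vanish
  have hrow : ∑ k', E (X (e, j) * X (e, k')) = E (X (e, j) * X (e, j)) := by
    have hsum := hE.2.2.2 e (X (e, j)) (by rw [totalDegree_X]; omega)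
    have hdiag := hE.map_mul_X_sq (e, j) 1 (by simp only [totalDegree_one, zero_add]; omega)
    rw [mul_sub, mul_one, map_sub, sub_eq_zero, mul_sum, map_sum] at hsum
    simpa [pow_two, hsum] using hdiag.symm
  have hjk0 : E (X (e, j) * X (e, k)) = 0 := by
    rw [← add_sum_erase _ _ (mem_univ j), add_eq_left,
      sum_eq_zero_iff_of_nonneg fun k' _ => hnonneg k'] at hrow
    exact hrow k (mem_erase.mpr ⟨hjk.symm, mem_univ k⟩)
  have hcs := E.sq_map_mul_le _ hE.map_sq_nonneg
    ((mem_restrictTotalDegree _ _ _).mpr hp)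
    ((mem_restrictTotalDegree _ _ _).mpr ((totalDegree_mul (X (e, j)) (X (e, k))).trans (by
      simp only [totalDegree_X]; omega)))
  rw [hpair, hjk0, mul_zero] at hcs
  exact pow_eq_zero_iff (n := 2) (by norm_num) |>.mp (le_antisymm hcs (sq_nonneg _))

theorem map_mul_prod_sum_X (hE : IsPseudoExpectation n d q t E) {ι : Type*} [DecidableEq ι]
    (ε : ι → Fin n × Fin d) (s : Finset ι) (p : MvPolynomial ((Fin n × Fin d) × Fin q) ℝ)
    (hp : p.totalDegree + #s ≤ t) :
    E (p * ∏ i ∈ s, ∑ j, X (ε i, j)) = E p := by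
  induction s using Finset.induction generalizing p with
  | empty => simp
  | insert a s ha ih =>
    rw [card_insert_of_notMem ha] at hp
    have hs : (∏ i ∈ s, ∑ j : Fin q, (X (ε i, j) : MvPolynomial _ ℝ)).totalDegree ≤ #s :=
      (totalDegree_finsetProd _ _).trans <| by
        simpa using sum_le_sum fun i (_ : i ∈ s) =>
          totalDegree_finsetSum_le fun j (_ : j ∈ univ) => (totalDegree_X (R := ℝ) (ε i, j)).le
    have hdeg : (p * ∏ i ∈ s, ∑ j, X (ε i, j)).totalDegree + 1 ≤ t := by
      have := totalDegree_mul p (∏ i ∈ s, ∑ j, X (ε i, j))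
      omega
    have hsum := hE.2.2.2 (ε a) _ hdeg
    rw [mul_sub, mul_one, map_sub, sub_eq_zero] at hsum
    rw [prod_insert ha, mul_left_comm, mul_comm, hsum, ih p (by omega)]

theorem map_eq_sum_map_mul_prod (hE : IsPseudoExpectation n d q t E) {ι : Type*} [Fintype ι]
    [DecidableEq ι] (ε : ι → Fin n × Fin d) (p : MvPolynomial ((Fin n × Fin d) × Fin q) ℝ)
    (hp : p.totalDegree + Fintype.card ι ≤ t) :
    E p = ∑ α : ι → Fin q, E (p * ∏ i, X (ε i, α i)) := by
  rw [← map_sum, ← mul_sum, ← Fintype.prod_sum (fun i j => X (ε i, j)),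
    hE.map_mul_prod_sum_X ε univ p hp]

theorem map_mul_one_sub_prod (hE : IsPseudoExpectation n d q t E) {ι : Type*} [Fintype ι]
    [DecidableEq ι] (ε : ι → Fin n × Fin d) (p : MvPolynomial ((Fin n × Fin d) × Fin q) ℝ)
    (hp : p.totalDegree + Fintype.card ι ≤ t) (a : ι → Fin q) :
    E (p * (1 - ∏ i, X (ε i, a i))) = ∑ α ∈ univ.erase a, E (p * ∏ i, X (ε i, α i)) := by
  rw [mul_sub, mul_one, map_sub, hE.map_eq_sum_map_mul_prod ε p hp,
    ← add_sum_erase _ _ (mem_univ a), add_sub_cancel_left]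

/-- Booleanity absorbs a repeated variable, and two different symbols on one edge annihilate. -/
theorem map_mul_X_mul_prod_eq_ite (hE : IsPseudoExpectation n d q t E) (ht : 4 ≤ t) {ι : Type*}
    [Fintype ι] [DecidableEq ι] (ε : ι → Fin n × Fin d) (α : ι → Fin q) (i : ι) (c : Fin q)
    (p : MvPolynomial ((Fin n × Fin d) × Fin q) ℝ) (hp : p.totalDegree + Fintype.card ι ≤ t / 2) :
    E (p * X (ε i, c) * ∏ i', X (ε i', α i'))
      = if α i = c then E (p * ∏ i', X (ε i', α i')) else 0 := by
  split_ifs with hc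
  · subst hc
    exact hE.map_mul_X_mul_prod_X_self (fun i' => (ε i', α i')) i p (by omega)
  · have hcard : #(univ.erase i) + 1 = Fintype.card ι := card_erase_add_one (mem_univ i)
    have hdeg := totalDegree_mul p (∏ i' ∈ univ.erase i, X (ε i', α i'))
    have := totalDegree_prod_X_le (R := ℝ) (univ.erase i) (fun i' => (ε i', α i'))
    rw [← mul_prod_erase univ _ (mem_univ i), ← hE.map_mul_X_mul_X_eq_zero ht (ε i) (Ne.symm hc)
      (p * ∏ i' ∈ univ.erase i, X (ε i', α i')) (by omega)]
    congr 1; ring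

section LocalDistribution

variable {ι κ : Type*} [Fintype ι] [DecidableEq ι] [Fintype κ] [DecidableEq κ]

/-- `α ↦ Ẽ[Z_{ε, α}]` is a probability distribution whose `i`-th marginal is `c ↦ Ẽ[Z_{ε i, c}]`. -/
theorem sum_one_sub_map_X_eq_sum_hammingDist_mul (hE : IsPseudoExpectation n d q t E)
    (ht : 4 * Fintype.card ι ≤ t) (ε : ι → Fin n × Fin d) (a : ι → Fin q) :
    ∑ i, (1 - E (X (ε i, a i))) = ∑ α : ι → Fin q, hammingDist α a * E (∏ i, X (ε i, α i)) := by
  have hone : 1 = ∑ α : ι → Fin q, E (∏ i, X (ε i, α i)) := by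
    simpa [hE.1] using
      hE.map_eq_sum_map_mul_prod ε 1 (by simp only [totalDegree_one, zero_add]; omega)
  have hmarg (i : ι) : 1 - E (X (ε i, a i))
      = ∑ α : ι → Fin q, (if α i ≠ a i then 1 else 0) * E (∏ i, X (ε i, α i)) := by
    have hcard : 0 < Fintype.card ι := Fintype.card_pos_iff.mpr ⟨i⟩
    have hX := hE.map_eq_sum_map_mul_prod ε (X (ε i, a i)) (by simp only [totalDegree_X]; omega)
    have hterm (α : ι → Fin q) : E (X (ε i, a i) * ∏ i, X (ε i, α i))
        = if α i = a i then E (∏ i, X (ε i, α i)) else 0 := by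
      simpa using hE.map_mul_X_mul_prod_eq_ite (by omega) ε α i (a i) 1
        (by simp only [totalDegree_one, zero_add]; omega)
    conv_lhs => rw [hX, sum_congr rfl fun α _ => hterm α, hone, ← sum_sub_distrib]
    exact sum_congr rfl fun α _ => by by_cases h : α i = a i <;> simp [h]
  simp only [hmarg]
  rw [sum_comm]
  simp only [← sum_mul, sum_boole, hammingDist]

theorem mul_map_one_sub_prod_le_sum (hE : IsPseudoExpectation n d q t E)
    (ht : 4 * Fintype.card ι ≤ t) (ε : ι → Fin n × Fin d) {C : Set (ι → Fin q)} {δ : ℝ}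
    (hC : ∀ u ∈ C, ∀ v ∈ C, u ≠ v → δ * Fintype.card ι ≤ hammingDist u v)
    (hkill : ∀ α ∉ C, E (∏ i, X (ε i, α i)) = 0) {a : ι → Fin q} (ha : a ∈ C) :
    δ * Fintype.card ι * E (1 - ∏ i, X (ε i, a i)) ≤ ∑ i, (1 - E (X (ε i, a i))) := by
  have hα (α : ι → Fin q) : 0 ≤ E (∏ i, X (ε i, α i)) :=
    hE.map_prod_X_nonneg (fun i => (ε i, α i)) univ (by simp only [card_univ]; omega)
  rw [← one_mul (1 - _),
    hE.map_mul_one_sub_prod ε 1 (by simp only [totalDegree_one, zero_add]; omega) a,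
    hE.sum_one_sub_map_X_eq_sum_hammingDist_mul ht ε a, ← add_sum_erase _ _ (mem_univ a),
    hammingDist_self, Nat.cast_zero, zero_mul, zero_add, mul_sum]
  refine sum_le_sum fun α hαa => ?_
  rw [one_mul]
  by_cases hαC : α ∈ C
  · exact mul_le_mul_of_nonneg_right (hC α hαC a ha (ne_of_mem_erase hαa)) (hα α)
  · simp [hkill α hαC]

theorem map_prod_mul_one_sub_prod_nonneg (hE : IsPseudoExpectation n d q t E)
    (ht : 2 * (Fintype.card ι + Fintype.card κ) ≤ t) (w : ι → (Fin n × Fin d) × Fin q)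
    (ε : κ → Fin n × Fin d) (b : κ → Fin q) :
    0 ≤ E ((∏ i, X (w i)) * (1 - ∏ j, X (ε j, b j))) := by
  have hw := totalDegree_prod_X_le (R := ℝ) univ w
  rw [card_univ] at hw
  rw [hE.map_mul_one_sub_prod ε _ (by omega) b]
  refine sum_nonneg fun β _ => ?_
  simpa [Fintype.prod_sum_type] using
    hE.map_prod_X_nonneg (Sum.elim w fun j => (ε j, β j)) univ (by simpa using ht)

theorem one_sub_map_X_le_map_mul (hE : IsPseudoExpectation n d q t E)
    (ht : 2 * (Fintype.card ι + Fintype.card κ) ≤ t) (εA : ι → Fin n × Fin d)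
    (εB : κ → Fin n × Fin d) (a : ι → Fin q) (b : κ → Fin q) (i₀ : ι) (j₀ : κ)
    (he : εB j₀ = εA i₀) (hc : b j₀ = a i₀) :
    1 - E (X (εA i₀, a i₀))
      ≤ E ((1 - ∏ i, X (εA i, a i)) * (1 - ∏ j, X (εB j, b j))) := by
  have hι : 0 < Fintype.card ι := Fintype.card_pos_iff.mpr ⟨i₀⟩
  have hκ : 0 < Fintype.card κ := Fintype.card_pos_iff.mpr ⟨j₀⟩
  set ZA : MvPolynomial _ ℝ := ∏ i, X (εA i, a i)
  set ZB : MvPolynomial _ ℝ := ∏ j, X (εB j, b j)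
  set x : MvPolynomial _ ℝ := X (εA i₀, a i₀)
  have hdegB : ZB.totalDegree ≤ Fintype.card κ := by
    simpa using totalDegree_prod_X_le (R := ℝ) univ fun j => (εB j, b j)
  have hdeg1B : (1 - ZB).totalDegree ≤ Fintype.card κ := by
    simpa using totalDegree_one_sub_prod_X_le (R := ℝ) univ fun j => (εB j, b j)
  have hxA : E (x * ZA) = E ZA := by
    simpa using hE.map_mul_X_mul_prod_X_self (fun i => (εA i, a i)) i₀ 1
      (by simp only [totalDegree_one, zero_add]; omega)
  have hxB : E (x * ZB) = E ZB := by
    simpa [x, ← he, ← hc] using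
      hE.map_mul_X_mul_prod_X_self (fun j => (εB j, b j)) j₀ 1
        (by simp only [totalDegree_one, zero_add]; omega)
  have hxAB : E (ZB * x * ZA) = E (ZB * ZA) :=
    hE.map_mul_X_mul_prod_X_self (fun i => (εA i, a i)) i₀ ZB (by omega)
  have hdeg : ((1 - ZB) * x).totalDegree + Fintype.card ι ≤ t := by
    have := totalDegree_mul (1 - ZB) x
    rw [totalDegree_X] at this
    omega
  -- the gap between the two sides is `Ẽ[Z_e (1 - Z_A)(1 - Z_B)]`
  have hpos : 0 ≤ E ((1 - ZB) * x * (1 - ZA)) := by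
    rw [hE.map_mul_one_sub_prod εA _ hdeg a]
    refine sum_nonneg fun α _ => ?_
    rw [hE.map_mul_X_mul_prod_eq_ite (by omega) εA α i₀ (a i₀) (1 - ZB) (by omega)]
    split_ifs
    · rw [mul_comm]
      exact hE.map_prod_mul_one_sub_prod_nonneg ht (fun i => (εA i, α i)) εB b
    · rfl
  have hexp : (1 - ZB) * x * (1 - ZA) = x - x * ZA - x * ZB + ZB * x * ZA := by ring
  have hexp' : (1 - ZA) * (1 - ZB) = 1 - ZA - ZB + ZB * ZA := by ring
  rw [hexp, map_add, map_sub, map_sub, hxA, hxB, hxAB] at hpos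
  rw [hexp', map_add, map_sub, map_sub, hE.1]
  linarith

end LocalDistribution

theorem mul_sum_map_one_sub_ZR_div_le (hE : IsPseudoExpectation n d q t E)
    (hd : 0 < d) (ht : 4 * d ≤ t) (ψ : Fin n × Fin d ≃ Fin n × Fin d)
    {C₀ : Set (Fin d → Fin q)} {δ₀ : ℝ}
    (hC₀ : ∀ u ∈ C₀, ∀ v ∈ C₀, u ≠ v → δ₀ * d ≤ (hammingDist u v : ℝ))
    (hkill : ∀ r β, β ∉ C₀ → E (ZR n d q ψ r β) = 0) (h : Fin n × Fin d → Fin q)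
    (hrow : ∀ r, (fun j => h (ψ.symm (r, j))) ∈ C₀) :
    δ₀ * ((∑ r, E (1 - ZR n d q ψ r fun j => h (ψ.symm (r, j)))) / n)
      ≤ (∑ e : Fin n × Fin d, (1 - E (X (e, h e)))) / ((n : ℝ) * d) := by
  have hvertex (r : Fin n) := hE.mul_map_one_sub_prod_le_sum (by simpa using ht)
    (fun j => ψ.symm (r, j)) (by simpa using hC₀) (hkill r) (hrow r)
  have hsum : ∑ e : Fin n × Fin d, (1 - E (X (e, h e)))
      = ∑ r, ∑ j, (1 - E (X (ψ.symm (r, j), h (ψ.symm (r, j))))) := by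
    rw [← ψ.symm.sum_comp, Fintype.sum_prod_type]
  rw [mul_div_assoc', ← mul_div_mul_right _ _ (Nat.cast_ne_zero.mpr hd.ne'), mul_right_comm]
  refine div_le_div_of_nonneg_right ?_ (by positivity)
  rw [mul_sum, hsum]
  exact sum_le_sum fun r _ => by simpa only [Fintype.card_fin, ZR] using hvertex r

end IsPseudoExpectation

theorem IsEtaGood.sum_map_mul_le {n d q : ℕ} {σ : Fin n × Fin d ≃ Fin n × Fin d}
    {E : MvPolynomial ((Fin n × Fin d) × Fin q) ℝ →ₗ[ℝ] ℝ} {η : ℝ} (hgood : IsEtaGood n d q σ E η)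
    (hE1 : E 1 = 1) (a b : Fin n → Fin d → Fin q) :
    (∑ ℓ, ∑ r, E ((1 - ZL n d q ℓ (a ℓ)) * (1 - ZR n d q σ r (b r)))) / ((n : ℝ) * n)
      ≤ (∑ ℓ, E (1 - ZL n d q ℓ (a ℓ))) / n * ((∑ r, E (1 - ZR n d q σ r (b r))) / n) + η := by
  set cov : Fin n → Fin n → (Fin d → Fin q) → (Fin d → Fin q) → ℝ := fun ℓ r α β =>
    E (ZL n d q ℓ α * ZR n d q σ r β) - E (ZL n d q ℓ α) * E (ZR n d q σ r β)
  have hsplit (ℓ r) : E ((1 - ZL n d q ℓ (a ℓ)) * (1 - ZR n d q σ r (b r)))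
      = E (1 - ZL n d q ℓ (a ℓ)) * E (1 - ZR n d q σ r (b r)) + cov ℓ r (a ℓ) (b r) := by
    simp only [cov, one_sub_mul, mul_one_sub, map_sub, hE1]
    ring
  have hcov (ℓ r) : cov ℓ r (a ℓ) (b r) ≤ ∑ α, ∑ β, |cov ℓ r α β| :=
    (le_abs_self _).trans <|
      (single_le_sum (fun β _ => abs_nonneg (cov ℓ r (a ℓ) β)) (mem_univ (b r))).trans <|
        single_le_sum (f := fun α => ∑ β, |cov ℓ r α β|)
          (fun α _ => sum_nonneg fun β _ => abs_nonneg _) (mem_univ (a ℓ))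
  calc _ = (∑ ℓ, ∑ r, E (1 - ZL n d q ℓ (a ℓ)) * E (1 - ZR n d q σ r (b r))) / ((n : ℝ) * n)
        + (∑ ℓ, ∑ r, cov ℓ r (a ℓ) (b r)) / ((n : ℝ) * n) := by
        simp only [hsplit, sum_add_distrib, add_div]
    _ ≤ (∑ ℓ, ∑ r, E (1 - ZL n d q ℓ (a ℓ)) * E (1 - ZR n d q σ r (b r))) / ((n : ℝ) * n)
        + (∑ ℓ, ∑ r, ∑ α, ∑ β, |cov ℓ r α β|) / ((n : ℝ) * n) := by
        gcongr with ℓ _ r _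
        exact hcov ℓ r
    _ ≤ _ := by
        rw [div_mul_div_comm, sum_mul_sum]
        exact add_le_add_right hgood _

theorem tanner_pseudocodeword_distance_general (n d q t : ℕ) (hd : 1 ≤ d)
    (lam δ₀ η : ℝ) (hlam0 : 0 ≤ lam) (hδ₀0 : 0 < δ₀)
    (hlam : lam ≤ δ₀ / 3) (hη0 : 0 ≤ η) (hη : η ≤ δ₀ ^ 2 / 9)
    (σ : Fin n × Fin d ≃ Fin n × Fin d) (hmix : IsMixing n d σ lam)
    (C₀ : Set (Fin d → Fin q))
    (hC₀ : ∀ u ∈ C₀, ∀ v ∈ C₀, u ≠ v → δ₀ * d ≤ (hammingDist u v : ℝ))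
    (htd : 4 * d ≤ t)
    (E : MvPolynomial ((Fin n × Fin d) × Fin q) ℝ →ₗ[ℝ] ℝ)
    (hE : IsTannerPseudocodeword n d q t σ C₀ E) (hgood : IsEtaGood n d q σ E η)
    (h : Fin n × Fin d → Fin q)
    (hhL : ∀ ℓ : Fin n, (fun i => h (ℓ, i)) ∈ C₀)
    (hhR : ∀ r : Fin n, (fun j => h (σ.symm (r, j))) ∈ C₀) :
    (∑ e : Fin n × Fin d, (1 - E (X (e, h e)))) / ((n : ℝ) * d) ≤ 3 * η ∨
    δ₀ * (δ₀ - lam) - 3 * η ≤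
      (∑ e : Fin n × Fin d, (1 - E (X (e, h e)))) / ((n : ℝ) * d) := by
  obtain ⟨hE, hkillL, hkillR⟩ : IsPseudoExpectation n d q t E ∧ _ ∧ _ := hE
  have hdeg1 : (1 : MvPolynomial ((Fin n × Fin d) × Fin q) ℝ).totalDegree + d ≤ t := by
    simp only [totalDegree_one, zero_add]; omega
  set SA : Fin n → MvPolynomial _ ℝ := fun ℓ => 1 - ZL n d q ℓ fun i => h (ℓ, i)
  set SB : Fin n → MvPolynomial _ ℝ := fun r => 1 - ZR n d q σ r fun j => h (σ.symm (r, j))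
  have hSA (ℓ) : SA ℓ ∈ restrictTotalDegree _ ℝ (t / 2) := (mem_restrictTotalDegree _ _ _).mpr <|
    (totalDegree_one_sub_prod_X_le univ _).trans (by simp only [card_univ, Fintype.card_fin]; omega)
  have hSB (r) : SB r ∈ restrictTotalDegree _ ℝ (t / 2) := (mem_restrictTotalDegree _ _ _).mpr <|
    (totalDegree_one_sub_prod_X_le univ _).trans (by simp only [card_univ, Fintype.card_fin]; omega)
  have hSA2 (ℓ) : E (SA ℓ ^ 2) = E (SA ℓ) :=
    hE.map_one_sub_prod_X_sq _ univ (by simp only [card_univ, Fintype.card_fin]; omega)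
  have hSB2 (r) : E (SB r ^ 2) = E (SB r) :=
    hE.map_one_sub_prod_X_sq _ univ (by simp only [card_univ, Fintype.card_fin]; omega)
  have hx : 0 ≤ (∑ ℓ, E (SA ℓ)) / n :=
    div_nonneg (sum_nonneg fun ℓ _ => hSA2 ℓ ▸ hE.map_sq_nonneg _ (hSA ℓ)) n.cast_nonneg
  have hy : 0 ≤ (∑ r, E (SB r)) / n :=
    div_nonneg (sum_nonneg fun r _ => hSB2 r ▸ hE.map_sq_nonneg _ (hSB r)) n.cast_nonneg
  have hΔx : δ₀ * ((∑ ℓ, E (SA ℓ)) / n) ≤ _ :=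
    hE.mul_sum_map_one_sub_ZR_div_le hd htd (Equiv.refl _) hC₀
      (fun ℓ β hβ => by simpa [ZL, ZR] using hkillL ℓ β hβ 1 hdeg1) h hhL
  have hΔy : δ₀ * ((∑ r, E (SB r)) / n) ≤ _ :=
    hE.mul_sum_map_one_sub_ZR_div_le hd htd σ hC₀
      (fun r β hβ => by simpa using hkillR r β hβ 1 hdeg1) h hhR
  refine le_three_mul_or_le_of_le_mul_add hδ₀0 hlam hη0 hη hx hy hΔx hΔy ?_
  calc _ ≤ (∑ e : Fin n × Fin d, E (SA e.1 * SB (σ e).1)) / ((n : ℝ) * d) := by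
        refine div_le_div_of_nonneg_right (sum_le_sum fun e _ => ?_) (by positivity)
        exact hE.one_sub_map_X_le_map_mul (by simp only [Fintype.card_fin]; omega)
          (fun i => (e.1, i)) (fun j => σ.symm ((σ e).1, j)) (fun i => h (e.1, i))
          (fun j => h (σ.symm ((σ e).1, j))) e.2 (σ e).2 (by simp) (by simp)
    _ ≤ (∑ ℓ, ∑ r, E (SA ℓ * SB r)) / ((n : ℝ) * n)
          + lam * √((∑ ℓ, E (SA ℓ)) / n) * √((∑ r, E (SB r)) / n) := by
        simpa only [hSA2, hSB2, sub_le_iff_le_add'] using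
          hmix.map_sub_le hlam0 E _ hE.map_sq_nonneg SA SB hSA hSB
    _ ≤ _ := add_le_add_left (hgood.sum_map_mul_le hE.1 _ _) _

/-- **Distance of Tanner codes for `η`-good pseudocodewords.** The distance
`Δ(Ẽ, h) = 𝔼_e [1 − Ẽ[Z_{e,h(e)}]]` between an `η`-good Tanner pseudocodeword and a
codeword `h` is either at most `3η` or at least `δ₀(δ₀ − λ) − 3η`. -/
theorem tanner_pseudocodeword_distance (n d q t : ℕ) (hn : 1 ≤ n) (hd : 1 ≤ d) (hq : 2 ≤ q)
    (lam δ₀ η : ℝ) (hlam0 : 0 ≤ lam) (hδ₀0 : 0 < δ₀) (hδ₀1 : δ₀ ≤ 1)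
    (hlam : lam ≤ δ₀ / 3) (hη0 : 0 ≤ η) (hη : η ≤ δ₀ ^ 2 / 9)
    (σ : Fin n × Fin d ≃ Fin n × Fin d) (hmix : IsMixing n d σ lam)
    (C₀ : Set (Fin d → Fin q))
    (hC₀ : ∀ u ∈ C₀, ∀ v ∈ C₀, u ≠ v → δ₀ * d ≤ (hammingDist u v : ℝ))
    (ht : Even t) (htd : 4 * d ≤ t)
    (E : MvPolynomial ((Fin n × Fin d) × Fin q) ℝ →ₗ[ℝ] ℝ)
    (hE : IsTannerPseudocodeword n d q t σ C₀ E) (hgood : IsEtaGood n d q σ E η)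
    (h : Fin n × Fin d → Fin q)
    (hhL : ∀ ℓ : Fin n, (fun i => h (ℓ, i)) ∈ C₀)
    (hhR : ∀ r : Fin n, (fun j => h (σ.symm (r, j))) ∈ C₀) :
    (∑ e : Fin n × Fin d, (1 - E (X (e, h e)))) / ((n : ℝ) * d) ≤ 3 * η ∨
    δ₀ * (δ₀ - lam) - 3 * η ≤
      (∑ e : Fin n × Fin d, (1 - E (X (e, h e)))) / ((n : ℝ) * d) :=
  tanner_pseudocodeword_distance_general n d q t hd lam δ₀ η hlam0 hδ₀0 hlam hη0 hη σ hmix C₀ hC₀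
    htd E hE hgood h hhL hhR
end

section
/- (AEL distance amplification for η-good pseudocodewords) Let n, d ≥ 1, q ≥ 2, λ ≥ 0, η ≥ 0, let σ : Fin n × Fin d ≃ Fin n × Fin d be a bijection specifying a d-regular bipartite graph that is λ-mixing, let C₀ ⊆ (Fin d → Fin q) be a code in which any two distinct codewords differ in at least δ₀·d coordinates (0 ≤ δ₀ ≤ 1), let t ≥ 4d be even, let Ẽ be a degree-t AEL pseudocodeword with respect to σ and C₀ that is η-good, and let h : Fin n × Fin d → Fin q be a word all of whose left rows lie in C₀. Define Δ^L(Ẽ,h) := 𝔼_{ℓ ∈ Fin n}[1 − Ẽ[Z_{N_L(ℓ),h_L(ℓ)}]] and Δ^R(Ẽ,h) := 𝔼_{r ∈ Fin n}[1 − Ẽ[Z_{N_R(r),h_R(r)}]], where h_L(ℓ) is the left row of h at ℓ and h_R(r) is the right row of h at r. If Δ^L(Ẽ,h) > 0, then Δ^R(Ẽ,h) ≥ δ₀ − (λ + η)/Δ^L(Ẽ,h). -/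
open MvPolynomial

/-- A degree-`t` AEL pseudocodeword: a degree-`t` pseudoexpectation that in addition
respects the inner-code constraints on every left neighborhood. -/
def IsAELPseudocodeword (n d q t : ℕ) (C₀ : Set (Fin d → Fin q))
    (E : MvPolynomial ((Fin n × Fin d) × Fin q) ℝ →ₗ[ℝ] ℝ) : Prop :=
  IsPseudoExpectation n d q t E ∧
  (∀ (ℓ : Fin n) (α : Fin d → Fin q), α ∉ C₀ →
    ∀ p : MvPolynomial ((Fin n × Fin d) × Fin q) ℝ,
      p.totalDegree + d ≤ t → E (p * ZL n d q ℓ α) = 0)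

/-- Left distance `Δ^L(Ẽ, h) = 𝔼_ℓ [1 − Ẽ[Z_{N_L(ℓ), h_L(ℓ)}]]`. -/
noncomputable def deltaLPE (n d q : ℕ)
    (E : MvPolynomial ((Fin n × Fin d) × Fin q) ℝ →ₗ[ℝ] ℝ)
    (h : Fin n × Fin d → Fin q) : ℝ :=
  (∑ ℓ : Fin n, (1 - E (ZL n d q ℓ (fun i => h (ℓ, i))))) / n

/-- Right distance `Δ^R(Ẽ, h) = 𝔼_r [1 − Ẽ[Z_{N_R(r), h_R(r)}]]`. -/
noncomputable def deltaRPE (n d q : ℕ) (σ : Fin n × Fin d ≃ Fin n × Fin d)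
    (E : MvPolynomial ((Fin n × Fin d) × Fin q) ℝ →ₗ[ℝ] ℝ)
    (h : Fin n × Fin d → Fin q) : ℝ :=
  (∑ r : Fin n, (1 - E (ZR n d q σ r (fun j => h (σ.symm (r, j)))))) / n

/-!
Write `A ℓ = 1 - Z_{N_L(ℓ), h_L(ℓ)}` and `B r = Z_{N_R(r), h_R(r)}`, so that
`Δ^L = 𝔼_ℓ Ẽ[A ℓ]` and `1 - Δ^R = 𝔼_r Ẽ[B r]`. By `η`-goodness,
`Δ^L (1 - Δ^R) ≤ 𝔼_{ℓ,r} Ẽ[A ℓ B r] + η`. Factoring the Gram matrix of the `A ℓ, B r` under `Ẽ`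
writes `Ẽ[A ℓ B r]` as a sum of products of genuine functions, so `λ`-mixing bounds the pair
average by the edge average `𝔼_{(ℓ,i)} Ẽ[A ℓ B r(ℓ,i)]` plus `λ`. On the edges at `ℓ`, `A ℓ` splits
into the local views `α ≠ h_L(ℓ)`; only codewords survive, each agrees with `h_L(ℓ)` on at most
`(1 - δ₀) d` edges, and on the other edges `Z_{e,a} Z_{e,b} = 0` kills the product with `B r`.
So the edge average is at most `(1 - δ₀) Δ^L`, whence `Δ^L (δ₀ - Δ^R) ≤ λ + η`.
-/

open Finset

section Constraints

variable {V ε κ : Type*}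

def SatisfiesBoolean (t : ℕ) (E : MvPolynomial V ℝ →ₗ[ℝ] ℝ) : Prop :=
  ∀ (x : V) (p : MvPolynomial V ℝ), p.totalDegree + 2 ≤ t → E (p * (X x ^ 2 - X x)) = 0

def NonnegOnSquares (t : ℕ) (E : MvPolynomial V ℝ →ₗ[ℝ] ℝ) : Prop :=
  ∀ p : MvPolynomial V ℝ, p.totalDegree ≤ t / 2 → 0 ≤ E (p ^ 2)

def SatisfiesBlockSum [Fintype κ] (t : ℕ) (E : MvPolynomial (ε × κ) ℝ →ₗ[ℝ] ℝ) : Prop :=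
  ∀ (e : ε) (p : MvPolynomial (ε × κ) ℝ),
    p.totalDegree + 1 ≤ t → E (p * ((∑ j, X (e, j)) - 1)) = 0

end Constraints

section PseudoExpectation

variable {n d q t : ℕ} {E : MvPolynomial ((Fin n × Fin d) × Fin q) ℝ →ₗ[ℝ] ℝ}

theorem IsPseudoExpectation.nonnegOnSquares (hE : IsPseudoExpectation n d q t E) :
    NonnegOnSquares t E :=
  hE.2.1

theorem IsPseudoExpectation.satisfiesBoolean (hE : IsPseudoExpectation n d q t E) :
    SatisfiesBoolean t E :=
  fun x => hE.2.2.1 x.1 x.2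

theorem IsPseudoExpectation.satisfiesBlockSum (hE : IsPseudoExpectation n d q t E) :
    SatisfiesBlockSum t E :=
  hE.2.2.2

end PseudoExpectation

theorem MvPolynomial.totalDegree_prod_map_X_le {V R : Type*} [CommSemiring R] [Nontrivial R]
    (s : Multiset V) :
    ((s.map X).prod : MvPolynomial V R).totalDegree ≤ Multiset.card s := by
  induction s using Multiset.induction_on with
  | empty => simp
  | cons a s ih =>
    rw [Multiset.map_cons, Multiset.prod_cons, Multiset.card_cons]
    have := totalDegree_X (R := R) a
    exact (totalDegree_mul _ _).trans (by omega)

section Boolean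

variable {V : Type*} {t : ℕ} {E : MvPolynomial V ℝ →ₗ[ℝ] ℝ}

theorem SatisfiesBoolean.map_mul_X_sq (hE : SatisfiesBoolean t E) (x : V)
    {p : MvPolynomial V ℝ} (hp : p.totalDegree + 2 ≤ t) : E (p * X x ^ 2) = E (p * X x) := by
  have := hE x p hp
  rwa [mul_sub, map_sub, sub_eq_zero] at this

theorem SatisfiesBoolean.map_mul_prod_map_X_sq (hE : SatisfiesBoolean t E) (s : Multiset V)
    {w : MvPolynomial V ℝ} (hw : w.totalDegree + 2 * Multiset.card s ≤ t) :
    E (w * (s.map X).prod ^ 2) = E (w * (s.map X).prod) := by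
  induction s using Multiset.induction_on generalizing w with
  | empty => simp
  | cons a s ih =>
    rw [Multiset.card_cons] at hw
    have hm := totalDegree_prod_map_X_le (R := ℝ) s
    have hwa := totalDegree_mul w (X a ^ 2 : MvPolynomial V ℝ)
    have hwm := totalDegree_mul w (s.map X).prod
    rw [totalDegree_X_pow] at hwa
    simp only [Multiset.map_cons, Multiset.prod_cons]
    calc E (w * (X a * (s.map X).prod) ^ 2) = E ((w * X a ^ 2) * (s.map X).prod ^ 2) := by
          ring_nf
      _ = E ((w * X a ^ 2) * (s.map X).prod) := ih (by omega)
      _ = E ((w * (s.map X).prod) * X a ^ 2) := by ring_nf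
      _ = E ((w * (s.map X).prod) * X a) := hE.map_mul_X_sq a (by omega)
      _ = E (w * (X a * (s.map X).prod)) := by ring_nf

theorem SatisfiesBoolean.map_prod_map_X_nonneg (hE : SatisfiesBoolean t E)
    (hsq : NonnegOnSquares t E) {s : Multiset V} (hs : Multiset.card s ≤ t / 2) :
    0 ≤ E (s.map X).prod := by
  have := hE.map_mul_prod_map_X_sq s (w := 1) (by simp; omega)
  rw [one_mul, one_mul] at this
  exact this ▸ hsq _ ((totalDegree_prod_map_X_le s).trans hs)

end Boolean

section BlockSum

variable {ε κ : Type*} [Fintype κ] {t : ℕ} {E : MvPolynomial (ε × κ) ℝ →ₗ[ℝ] ℝ}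

theorem SatisfiesBlockSum.map_mul_sum_X (hE : SatisfiesBlockSum t E) (e : ε)
    {p : MvPolynomial (ε × κ) ℝ} (hp : p.totalDegree + 1 ≤ t) :
    E (p * ∑ j, X (e, j)) = E p := by
  have := hE e p hp
  rwa [mul_sub, mul_one, map_sub, sub_eq_zero] at this

theorem totalDegree_sum_X_le (e : ε) :
    (∑ j : κ, (X (e, j) : MvPolynomial (ε × κ) ℝ)).totalDegree ≤ 1 :=
  (totalDegree_finsetSum _ _).trans (Finset.sup_le fun _ _ => (totalDegree_X _).le)

theorem SatisfiesBlockSum.map_mul_prod_sum_X (hE : SatisfiesBlockSum t E) {ι : Type*}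
    (f : ι → ε) (s : Finset ι) {w : MvPolynomial (ε × κ) ℝ} (hw : w.totalDegree + #s ≤ t) :
    E (w * ∏ i ∈ s, ∑ j, X (f i, j)) = E w := by
  classical
  induction s using Finset.induction_on generalizing w with
  | empty => simp
  | insert a s ha ih =>
    rw [card_insert_of_notMem ha] at hw
    have hdeg : (∏ i ∈ s, ∑ j, (X (f i, j) : MvPolynomial (ε × κ) ℝ)).totalDegree ≤ #s :=
      (totalDegree_finsetProd _ _).trans <| by
        simpa using sum_le_sum fun i (_ : i ∈ s) => totalDegree_sum_X_le (κ := κ) (f i)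
    have := totalDegree_mul w (∏ i ∈ s, ∑ j, (X (f i, j) : MvPolynomial (ε × κ) ℝ))
    rw [prod_insert ha, mul_left_comm, mul_comm, hE.map_mul_sum_X (f a) (by omega)]
    exact ih (by omega)

theorem SatisfiesBlockSum.sum_map_mul_prod_X (hE : SatisfiesBlockSum t E) {ι : Type*}
    [Fintype ι] [DecidableEq ι] (f : ι → ε) {w : MvPolynomial (ε × κ) ℝ}
    (hw : w.totalDegree + Fintype.card ι ≤ t) :
    ∑ α : ι → κ, E (w * ∏ i, X (f i, α i)) = E w := by
  have hexpand : ∑ α : ι → κ, ∏ i, (X (f i, α i) : MvPolynomial (ε × κ) ℝ) =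
      ∏ i, ∑ j, X (f i, j) := by
    rw [prod_univ_sum, Fintype.piFinset_univ]
  rw [← map_sum, ← mul_sum, hexpand]
  exact hE.map_mul_prod_sum_X f univ hw

theorem SatisfiesBlockSum.map_prod_map_X_eq_zero (h1 : SatisfiesBlockSum t E)
    (hb : SatisfiesBoolean t E) (hsq : NonnegOnSquares t E) {s : Multiset (ε × κ)} {e : ε}
    {a b : κ} (hea : (e, a) ∈ s) (heb : (e, b) ∈ s) (hab : a ≠ b)
    (hs : Multiset.card s ≤ t / 2) : E (s.map X).prod = 0 := by
  classical
  obtain ⟨s₁, rfl⟩ := Multiset.exists_cons_of_mem hea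
  obtain ⟨s₂, rfl⟩ := Multiset.exists_cons_of_mem <|
    (Multiset.mem_cons.mp heb).resolve_left (by simpa using hab.symm)
  simp only [Multiset.card_cons] at hs
  have hm := totalDegree_prod_map_X_le (R := ℝ) s₂
  have hma := totalDegree_mul (s₂.map X).prod (X (e, a) : MvPolynomial (ε × κ) ℝ)
  rw [totalDegree_X] at hma
  set f : κ → ℝ := fun c => E ((s₂.map X).prod * (X (e, a) * X (e, c)))
  have hf : ∀ c, 0 ≤ f c := fun c => by
    have := hb.map_prod_map_X_nonneg hsq (s := (e, a) ::ₘ (e, c) ::ₘ s₂) (by simp; omega)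
    convert this using 2
    simp only [Multiset.map_cons, Multiset.prod_cons]
    ring
  -- `∑ c, X (e, c) = 1` and `X (e, a) ^ 2 = X (e, a)` make the off-diagonal terms sum to zero
  have hsum : ∑ c, f c = f a := by
    simp only [f, ← map_sum, ← mul_sum, ← mul_assoc]
    rw [h1.map_mul_sum_X e (by omega), mul_assoc, ← sq, hb.map_mul_X_sq _ (by omega)]
  have hzero : ∑ c ∈ univ.erase a, f c = 0 := by
    linarith [add_sum_erase univ f (mem_univ a)]
  have := (sum_eq_zero_iff_of_nonneg fun c _ => hf c).mp hzero b (by simp [hab.symm])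
  convert this using 2
  simp only [Multiset.map_cons, Multiset.prod_cons]
  ring

end BlockSum

section Mixing

open scoped MatrixOrder in
theorem exists_gram_factorization {R ι : Type*} [CommSemiring R] [Algebra ℝ R] [Fintype ι]
    (E : R →ₗ[ℝ] ℝ) (S : Submodule ℝ R) (hS : ∀ p ∈ S, 0 ≤ E (p * p)) (w : ι → R)
    (hw : ∀ k, w k ∈ S) :
    ∃ V : Matrix ι ι ℝ, ∀ k l, E (w k * w l) = ∑ c, V c k * V c l := by
  classical
  let Γ : Matrix ι ι ℝ := fun k l => E (w k * w l)
  have hΓ : Γ.PosSemidef := by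
    refine .of_dotProduct_mulVec_nonneg ?_ fun x => ?_
    · ext k l
      rw [Matrix.conjTranspose_apply, star_trivial]
      exact congrArg E (mul_comm _ _)
    · have hquad : dotProduct (star x) (Γ.mulVec x) =
          E ((∑ k, x k • w k) * ∑ k, x k • w k) := by
        rw [sum_mul_sum, map_sum]
        simp only [star_trivial, dotProduct, Matrix.mulVec, Γ, map_sum, smul_mul_smul_comm,
          map_smul, smul_eq_mul, mul_sum]
        exact sum_congr rfl fun _ _ => sum_congr rfl fun _ _ => by ring
      rw [hquad]
      exact hS _ (S.sum_mem fun k _ => S.smul_mem _ (hw k))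
  obtain ⟨V, hV⟩ := CStarAlgebra.nonneg_iff_eq_star_mul_self.mp hΓ.nonneg
  exact ⟨V, fun k l => by simpa [Γ, Matrix.mul_apply] using congrFun (congrFun hV k) l⟩

variable {n d : ℕ} {σ : Fin n × Fin d ≃ Fin n × Fin d} {lam : ℝ}

theorem IsMixing.abs_sum_sub_le (hmix : IsMixing n d σ lam) (hlam : 0 ≤ lam) {C : Type*}
    [Fintype C] (F G : C → Fin n → ℝ) :
    |(∑ c, ∑ e : Fin n × Fin d, F c e.1 * G c (σ e).1) / ((n : ℝ) * d)
        - (∑ c, (∑ ℓ, F c ℓ) * ∑ r, G c r) / ((n : ℝ) * n)|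
      ≤ lam * √((∑ c, ∑ ℓ, F c ℓ ^ 2) / n) * √((∑ c, ∑ r, G c r ^ 2) / n) := by
  rw [sum_div, sum_div, sum_div, sum_div, ← sum_sub_distrib, mul_assoc]
  calc _ ≤ ∑ c, |(∑ e : Fin n × Fin d, F c e.1 * G c (σ e).1) / ((n : ℝ) * d)
          - (∑ ℓ, F c ℓ) * (∑ r, G c r) / ((n : ℝ) * n)| := abs_sum_le_sum_abs _ _
    _ ≤ ∑ c, lam * (√((∑ ℓ, F c ℓ ^ 2) / n) * √((∑ r, G c r ^ 2) / n)) :=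
        sum_le_sum fun c _ => by
          simpa only [div_mul_div_comm, mul_assoc] using hmix (F c) (G c)
    _ ≤ _ := by
        rw [← mul_sum]
        exact mul_le_mul_of_nonneg_left
          (Real.sum_sqrt_mul_sqrt_le _ (fun c => by positivity) fun c => by positivity) hlam

theorem IsMixing.abs_map_sub_le {R : Type*} [CommSemiring R] [Algebra ℝ R]
    (hmix : IsMixing n d σ lam) (hlam : 0 ≤ lam) (E : R →ₗ[ℝ] ℝ) (S : Submodule ℝ R)
    (hS : ∀ p ∈ S, 0 ≤ E (p * p)) (A B : Fin n → R) (hA : ∀ ℓ, A ℓ ∈ S) (hB : ∀ r, B r ∈ S) :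
    |(∑ e : Fin n × Fin d, E (A e.1 * B (σ e).1)) / ((n : ℝ) * d)
        - (∑ ℓ, ∑ r, E (A ℓ * B r)) / ((n : ℝ) * n)|
      ≤ lam * √((∑ ℓ, E (A ℓ * A ℓ)) / n) * √((∑ r, E (B r * B r)) / n) := by
  obtain ⟨V, hV⟩ := exists_gram_factorization E S hS (Sum.elim A B) (Sum.forall.2 ⟨hA, hB⟩)
  have hAB (ℓ r : Fin n) : E (A ℓ * B r) = ∑ c, V c (.inl ℓ) * V c (.inr r) :=
    hV (.inl ℓ) (.inr r)
  have hAA (ℓ : Fin n) : E (A ℓ * A ℓ) = ∑ c, V c (.inl ℓ) ^ 2 := by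
    simpa [sq] using hV (.inl ℓ) (.inl ℓ)
  have hBB (r : Fin n) : E (B r * B r) = ∑ c, V c (.inr r) ^ 2 := by
    simpa [sq] using hV (.inr r) (.inr r)
  have hedges : ∑ e : Fin n × Fin d, E (A e.1 * B (σ e).1) =
      ∑ c, ∑ e : Fin n × Fin d, V c (.inl e.1) * V c (.inr (σ e).1) := by
    simp only [hAB]
    exact sum_comm
  have hpairs : ∑ ℓ, ∑ r, E (A ℓ * B r) = ∑ c, (∑ ℓ, V c (.inl ℓ)) * ∑ r, V c (.inr r) := by
    simp only [hAB, sum_mul_sum]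
    conv_rhs => rw [sum_comm]
    exact sum_congr rfl fun _ _ => sum_comm
  have hAsum : ∑ ℓ, E (A ℓ * A ℓ) = ∑ c, ∑ ℓ, V c (.inl ℓ) ^ 2 := by
    simp only [hAA]
    exact sum_comm
  have hBsum : ∑ r, E (B r * B r) = ∑ c, ∑ r, V c (.inr r) ^ 2 := by
    simp only [hBB]
    exact sum_comm
  rw [hedges, hpairs, hAsum, hBsum]
  exact hmix.abs_sum_sub_le hlam (fun c ℓ => V c (.inl ℓ)) fun c r => V c (.inr r)

end Mixing

section AEL

variable {n d q t : ℕ} {σ : Fin n × Fin d ≃ Fin n × Fin d}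
  {E : MvPolynomial ((Fin n × Fin d) × Fin q) ℝ →ₗ[ℝ] ℝ}

theorem ZL_eq_prod_map_X (ℓ : Fin n) (α : Fin d → Fin q) :
    ZL n d q ℓ α = ((univ.val.map fun i => ((ℓ, i), α i)).map X).prod := by
  rw [ZL, prod_eq_multiset_prod, Multiset.map_map]
  rfl

theorem ZR_eq_prod_map_X (r : Fin n) (β : Fin d → Fin q) :
    ZR n d q σ r β = ((univ.val.map fun j => (σ.symm (r, j), β j)).map X).prod := by
  rw [ZR, prod_eq_multiset_prod, Multiset.map_map]
  rfl

theorem ZL_mul_ZR_eq_prod_map_X (ℓ r : Fin n) (α β : Fin d → Fin q) :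
    ZL n d q ℓ α * ZR n d q σ r β =
      ((univ.val.map (fun i => ((ℓ, i), α i)) +
        univ.val.map fun j => (σ.symm (r, j), β j)).map X).prod := by
  rw [ZL_eq_prod_map_X, ZR_eq_prod_map_X, Multiset.map_add, Multiset.prod_add]

theorem totalDegree_ZL_le (ℓ : Fin n) (α : Fin d → Fin q) : (ZL n d q ℓ α).totalDegree ≤ d := by
  rw [ZL_eq_prod_map_X]
  simpa using totalDegree_prod_map_X_le (R := ℝ) (univ.val.map fun i => ((ℓ, i), α i))

theorem totalDegree_ZR_le (r : Fin n) (β : Fin d → Fin q) :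
    (ZR n d q σ r β).totalDegree ≤ d := by
  rw [ZR_eq_prod_map_X]
  simpa using totalDegree_prod_map_X_le (R := ℝ) (univ.val.map fun j => (σ.symm (r, j), β j))

theorem SatisfiesBoolean.map_ZL_mul_self (hE : SatisfiesBoolean t E) (htd : 2 * d ≤ t)
    (ℓ : Fin n) (α : Fin d → Fin q) : E (ZL n d q ℓ α * ZL n d q ℓ α) = E (ZL n d q ℓ α) := by
  rw [ZL_eq_prod_map_X, ← sq]
  have := hE.map_mul_prod_map_X_sq (univ.val.map fun i => ((ℓ, i), α i)) (w := 1)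
    (by simpa using htd)
  rwa [one_mul, one_mul] at this

theorem SatisfiesBoolean.map_ZR_mul_self (hE : SatisfiesBoolean t E) (htd : 2 * d ≤ t)
    (r : Fin n) (β : Fin d → Fin q) :
    E (ZR n d q σ r β * ZR n d q σ r β) = E (ZR n d q σ r β) := by
  rw [ZR_eq_prod_map_X, ← sq]
  have := hE.map_mul_prod_map_X_sq (univ.val.map fun j => (σ.symm (r, j), β j)) (w := 1)
    (by simpa using htd)
  rwa [one_mul, one_mul] at this

theorem SatisfiesBoolean.map_ZL_nonneg (hE : SatisfiesBoolean t E) (hsq : NonnegOnSquares t E)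
    (htd : 2 * d ≤ t) (ℓ : Fin n) (α : Fin d → Fin q) : 0 ≤ E (ZL n d q ℓ α) := by
  rw [ZL_eq_prod_map_X]
  exact hE.map_prod_map_X_nonneg hsq (by simp; omega)

theorem SatisfiesBlockSum.sum_map_mul_ZL (hE : SatisfiesBlockSum t E) (ℓ : Fin n)
    {p : MvPolynomial ((Fin n × Fin d) × Fin q) ℝ} (hp : p.totalDegree + d ≤ t) :
    ∑ α, E (p * ZL n d q ℓ α) = E p := by
  have hp' : p.totalDegree + Fintype.card (Fin d) ≤ t := by rwa [Fintype.card_fin]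
  exact hE.sum_map_mul_prod_X (fun i => (ℓ, i)) hp'

theorem SatisfiesBlockSum.sum_map_mul_ZR (hE : SatisfiesBlockSum t E) (r : Fin n)
    {p : MvPolynomial ((Fin n × Fin d) × Fin q) ℝ} (hp : p.totalDegree + d ≤ t) :
    ∑ β, E (p * ZR n d q σ r β) = E p := by
  have hp' : p.totalDegree + Fintype.card (Fin d) ≤ t := by rwa [Fintype.card_fin]
  exact hE.sum_map_mul_prod_X (fun j => σ.symm (r, j)) hp'

theorem IsPseudoExpectation.map_ZL_mul_ZR_nonneg (hE : IsPseudoExpectation n d q t E)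
    (htd : 4 * d ≤ t) (ℓ r : Fin n) (α β : Fin d → Fin q) :
    0 ≤ E (ZL n d q ℓ α * ZR n d q σ r β) := by
  rw [ZL_mul_ZR_eq_prod_map_X]
  exact hE.satisfiesBoolean.map_prod_map_X_nonneg hE.nonnegOnSquares (by simp; omega)

theorem IsPseudoExpectation.map_ZL_mul_ZR_le (hE : IsPseudoExpectation n d q t E)
    (htd : 4 * d ≤ t) (ℓ r : Fin n) (α β : Fin d → Fin q) :
    E (ZL n d q ℓ α * ZR n d q σ r β) ≤ E (ZL n d q ℓ α) := by
  have hdeg := totalDegree_ZL_le ℓ α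
  rw [← hE.satisfiesBlockSum.sum_map_mul_ZR (σ := σ) r (p := ZL n d q ℓ α) (by omega)]
  exact single_le_sum (f := fun β => E (ZL n d q ℓ α * ZR n d q σ r β))
    (fun β _ => hE.map_ZL_mul_ZR_nonneg htd ℓ r α β) (mem_univ β)

theorem IsPseudoExpectation.map_ZL_mul_ZR_eq_zero (hE : IsPseudoExpectation n d q t E)
    (htd : 4 * d ≤ t) {ℓ r : Fin n} {α β : Fin d → Fin q} {i j : Fin d}
    (hij : σ.symm (r, j) = (ℓ, i)) (hne : α i ≠ β j) :
    E (ZL n d q ℓ α * ZR n d q σ r β) = 0 := by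
  rw [ZL_mul_ZR_eq_prod_map_X]
  refine hE.satisfiesBlockSum.map_prod_map_X_eq_zero hE.satisfiesBoolean hE.nonnegOnSquares
    (e := (ℓ, i)) ?_ ?_ hne (by simp; omega)
  · exact Multiset.mem_add.2 (.inl (Multiset.mem_map.2 ⟨i, mem_univ_val i, rfl⟩))
  · exact Multiset.mem_add.2 (.inr (Multiset.mem_map.2 ⟨j, mem_univ_val j, by rw [hij]⟩))

end AEL

theorem map_one_sub_mul_self {R : Type*} [CommRing R] [Algebra ℝ R] {E : R →ₗ[ℝ] ℝ}
    (hone : E 1 = 1) {z : R} (hz : E (z * z) = E z) : E ((1 - z) * (1 - z)) = 1 - E z := by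
  rw [show (1 - z) * (1 - z) = 1 - z - z + z * z by ring, map_add, map_sub, map_sub, hone, hz]
  ring

theorem card_filter_eq_le_of_le_hammingDist {ι β : Type*} [Fintype ι] [DecidableEq β]
    {u v : ι → β} {δ : ℝ} (h : δ * Fintype.card ι ≤ hammingDist u v) :
    (#{i | u i = v i} : ℝ) ≤ (1 - δ) * Fintype.card ι := by
  have hsplit := card_filter_add_card_filter_not (s := univ) fun i => u i = v i
  rw [card_univ] at hsplit
  have : (#{i | u i = v i} : ℝ) + hammingDist u v = Fintype.card ι := by
    exact_mod_cast hsplit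
  linarith

section Distance

variable {n d q t : ℕ} {σ : Fin n × Fin d ≃ Fin n × Fin d}
  {E : MvPolynomial ((Fin n × Fin d) × Fin q) ℝ →ₗ[ℝ] ℝ} {h : Fin n × Fin d → Fin q}

noncomputable def leftMismatch (n d q : ℕ) (h : Fin n × Fin d → Fin q) (ℓ : Fin n) :
    MvPolynomial ((Fin n × Fin d) × Fin q) ℝ :=
  1 - ZL n d q ℓ (fun i => h (ℓ, i))

noncomputable def rightMatch (n d q : ℕ) (σ : Fin n × Fin d ≃ Fin n × Fin d)
    (h : Fin n × Fin d → Fin q) (r : Fin n) : MvPolynomial ((Fin n × Fin d) × Fin q) ℝ :=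
  ZR n d q σ r (fun j => h (σ.symm (r, j)))

theorem deltaLPE_eq (hone : E 1 = 1) :
    deltaLPE n d q E h = (∑ ℓ, E (leftMismatch n d q h ℓ)) / n := by
  simp [deltaLPE, leftMismatch, hone]

theorem deltaRPE_eq (hn : n ≠ 0) :
    deltaRPE n d q σ E h = 1 - (∑ r, E (rightMatch n d q σ h r)) / n := by
  rw [deltaRPE, sum_sub_distrib]
  simp only [sum_const, card_univ, Fintype.card_fin, nsmul_eq_mul, mul_one, rightMatch]
  field_simp

theorem totalDegree_leftMismatch_le (ℓ : Fin n) : (leftMismatch n d q h ℓ).totalDegree ≤ d :=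
  (totalDegree_sub _ _).trans (max_le (by simp) (totalDegree_ZL_le _ _))

theorem SatisfiesBlockSum.map_leftMismatch_mul (hE : SatisfiesBlockSum t E) (ℓ : Fin n)
    {p : MvPolynomial ((Fin n × Fin d) × Fin q) ℝ} (hp : p.totalDegree + d ≤ t) :
    E (leftMismatch n d q h ℓ * p) =
      ∑ α ∈ univ.erase (fun i => h (ℓ, i)), E (ZL n d q ℓ α * p) := by
  have hsplit := add_sum_erase univ (fun α => E (p * ZL n d q ℓ α)) (mem_univ fun i => h (ℓ, i))
  rw [hE.sum_map_mul_ZL ℓ hp] at hsplit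
  simp only [mul_comm p] at hsplit
  rw [leftMismatch, sub_mul, one_mul, map_sub]
  linarith

theorem IsPseudoExpectation.map_leftMismatch_mul_self_le_one (hE : IsPseudoExpectation n d q t E)
    (htd : 2 * d ≤ t) (ℓ : Fin n) : E (leftMismatch n d q h ℓ * leftMismatch n d q h ℓ) ≤ 1 := by
  rw [leftMismatch, map_one_sub_mul_self hE.1 (hE.satisfiesBoolean.map_ZL_mul_self htd _ _)]
  linarith [hE.satisfiesBoolean.map_ZL_nonneg hE.nonnegOnSquares htd ℓ fun i => h (ℓ, i)]

theorem IsPseudoExpectation.map_rightMatch_mul_self_le_one (hE : IsPseudoExpectation n d q t E)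
    (htd : 2 * d ≤ t) (r : Fin n) : E (rightMatch n d q σ h r * rightMatch n d q σ h r) ≤ 1 := by
  have hidem := hE.satisfiesBoolean.map_ZR_mul_self (σ := σ) htd r fun j => h (σ.symm (r, j))
  have hdeg : (1 - rightMatch n d q σ h r).totalDegree ≤ t / 2 :=
    (totalDegree_sub _ _).trans (max_le (by simp) ((totalDegree_ZR_le _ _).trans (by omega)))
  have := hE.nonnegOnSquares _ hdeg
  rw [sq, rightMatch, map_one_sub_mul_self hE.1 hidem] at this
  rw [rightMatch, hidem]
  linarith

theorem IsAELPseudocodeword.sum_map_ZL_mul_rightMatch_le {C₀ : Set (Fin d → Fin q)} {δ₀ : ℝ}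
    (hE : IsAELPseudocodeword n d q t C₀ E) (htd : 4 * d ≤ t) (hδ₀1 : δ₀ ≤ 1)
    (hC₀ : ∀ u ∈ C₀, ∀ v ∈ C₀, u ≠ v → δ₀ * d ≤ (hammingDist u v : ℝ))
    (hhL : ∀ ℓ : Fin n, (fun i => h (ℓ, i)) ∈ C₀) (ℓ : Fin n) {α : Fin d → Fin q}
    (hα : α ≠ fun i => h (ℓ, i)) :
    ∑ i, E (ZL n d q ℓ α * rightMatch n d q σ h (σ (ℓ, i)).1) ≤
      (1 - δ₀) * d * E (ZL n d q ℓ α) := by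
  have hZ := hE.1.satisfiesBoolean.map_ZL_nonneg hE.1.nonnegOnSquares (by omega) ℓ α
  by_cases hαC : α ∈ C₀
  · have hterm (i : Fin d) : E (ZL n d q ℓ α * rightMatch n d q σ h (σ (ℓ, i)).1) ≤
        if α i = h (ℓ, i) then E (ZL n d q ℓ α) else 0 := by
      split_ifs with hi
      · exact hE.1.map_ZL_mul_ZR_le htd _ _ _ _
      · exact (hE.1.map_ZL_mul_ZR_eq_zero htd (i := i) (j := (σ (ℓ, i)).2) (by simp)
          (by simpa using hi)).le
    have hagree : (#{i | α i = h (ℓ, i)} : ℝ) ≤ (1 - δ₀) * d := by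
      simpa using card_filter_eq_le_of_le_hammingDist (ι := Fin d) (u := α)
        (v := fun i => h (ℓ, i)) (by simpa using hC₀ α hαC _ (hhL ℓ) hα)
    calc _ ≤ ∑ i, if α i = h (ℓ, i) then E (ZL n d q ℓ α) else 0 := sum_le_sum fun i _ => hterm i
      _ = #{i | α i = h (ℓ, i)} * E (ZL n d q ℓ α) := by rw [sum_ite, sum_const_zero, add_zero,
          sum_const, nsmul_eq_mul]
      _ ≤ _ := mul_le_mul_of_nonneg_right hagree hZ
  · have hzero (i : Fin d) : E (ZL n d q ℓ α * rightMatch n d q σ h (σ (ℓ, i)).1) = 0 := by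
      have := totalDegree_ZR_le (σ := σ) (σ (ℓ, i)).1 fun j => h (σ.symm ((σ (ℓ, i)).1, j))
      rw [mul_comm]
      exact hE.2 ℓ α hαC _ (by rw [rightMatch]; omega)
    simp only [hzero, sum_const_zero]
    exact mul_nonneg (mul_nonneg (by linarith) d.cast_nonneg) hZ

theorem IsAELPseudocodeword.sum_map_leftMismatch_mul_rightMatch_le {C₀ : Set (Fin d → Fin q)}
    {δ₀ : ℝ} (hE : IsAELPseudocodeword n d q t C₀ E) (htd : 4 * d ≤ t) (hδ₀1 : δ₀ ≤ 1)
    (hC₀ : ∀ u ∈ C₀, ∀ v ∈ C₀, u ≠ v → δ₀ * d ≤ (hammingDist u v : ℝ))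
    (hhL : ∀ ℓ : Fin n, (fun i => h (ℓ, i)) ∈ C₀) :
    ∑ e : Fin n × Fin d, E (leftMismatch n d q h e.1 * rightMatch n d q σ h (σ e).1) ≤
      (1 - δ₀) * d * ∑ ℓ, E (leftMismatch n d q h ℓ) := by
  have h1 := hE.1.satisfiesBlockSum
  rw [Fintype.sum_prod_type, mul_sum]
  refine sum_le_sum fun ℓ _ => ?_
  have hmiss : E (leftMismatch n d q h ℓ) =
      ∑ α ∈ univ.erase (fun i => h (ℓ, i)), E (ZL n d q ℓ α) := by
    simpa using h1.map_leftMismatch_mul ℓ (p := 1) (by simp; omega)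
  calc ∑ i, E (leftMismatch n d q h ℓ * rightMatch n d q σ h (σ (ℓ, i)).1)
      = ∑ α ∈ univ.erase (fun i => h (ℓ, i)),
          ∑ i, E (ZL n d q ℓ α * rightMatch n d q σ h (σ (ℓ, i)).1) := by
        rw [sum_comm]
        refine sum_congr rfl fun i _ => h1.map_leftMismatch_mul ℓ ?_
        have := totalDegree_ZR_le (σ := σ) (σ (ℓ, i)).1 fun j => h (σ.symm ((σ (ℓ, i)).1, j))
        rw [rightMatch]
        omega
    _ ≤ ∑ α ∈ univ.erase (fun i => h (ℓ, i)), (1 - δ₀) * d * E (ZL n d q ℓ α) :=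
        sum_le_sum fun α hα =>
          hE.sum_map_ZL_mul_rightMatch_le htd hδ₀1 hC₀ hhL ℓ (ne_of_mem_erase hα)
    _ = (1 - δ₀) * d * E (leftMismatch n d q h ℓ) := by rw [← mul_sum, hmiss]

theorem IsAELPseudocodeword.edgeAverage_le {C₀ : Set (Fin d → Fin q)}
    {δ₀ : ℝ} (hE : IsAELPseudocodeword n d q t C₀ E) (hn : 1 ≤ n) (hd : 1 ≤ d) (htd : 4 * d ≤ t)
    (hδ₀1 : δ₀ ≤ 1) (hC₀ : ∀ u ∈ C₀, ∀ v ∈ C₀, u ≠ v → δ₀ * d ≤ (hammingDist u v : ℝ))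
    (hhL : ∀ ℓ : Fin n, (fun i => h (ℓ, i)) ∈ C₀) :
    (∑ e : Fin n × Fin d, E (leftMismatch n d q h e.1 * rightMatch n d q σ h (σ e).1)) /
        ((n : ℝ) * d) ≤ (1 - δ₀) * deltaLPE n d q E h := by
  have hn' : (0 : ℝ) < n := by exact_mod_cast hn
  have hd' : (0 : ℝ) < d := by exact_mod_cast hd
  rw [deltaLPE_eq hE.1.1, div_le_iff₀ (by positivity)]
  calc _ ≤ (1 - δ₀) * d * ∑ ℓ, E (leftMismatch n d q h ℓ) :=
        hE.sum_map_leftMismatch_mul_rightMatch_le htd hδ₀1 hC₀ hhL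
    _ = _ := by field_simp

theorem IsPseudoExpectation.pairAverage_le_edgeAverage_add {lam : ℝ}
    (hE : IsPseudoExpectation n d q t E) (hn : 1 ≤ n) (htd : 4 * d ≤ t)
    (hmix : IsMixing n d σ lam) (hlam : 0 ≤ lam) :
    (∑ ℓ, ∑ r, E (leftMismatch n d q h ℓ * rightMatch n d q σ h r)) / ((n : ℝ) * n) ≤
      (∑ e : Fin n × Fin d, E (leftMismatch n d q h e.1 * rightMatch n d q σ h (σ e).1)) /
        ((n : ℝ) * d) + lam := by
  have hn' : (0 : ℝ) < n := by exact_mod_cast hn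
  let S := restrictTotalDegree ((Fin n × Fin d) × Fin q) ℝ (t / 2)
  have hS (p) (hp : p ∈ S) : 0 ≤ E (p * p) :=
    sq p ▸ hE.nonnegOnSquares p ((mem_restrictTotalDegree _ _ _).1 hp)
  have hmixE := hmix.abs_map_sub_le hlam E S hS (leftMismatch n d q h) (rightMatch n d q σ h)
    (fun ℓ => (mem_restrictTotalDegree _ _ _).2 ((totalDegree_leftMismatch_le ℓ).trans (by omega)))
    (fun r => (mem_restrictTotalDegree _ _ _).2 ((totalDegree_ZR_le _ _).trans (by omega)))
  have hmean {f : Fin n → ℝ} (hf : ∀ k, f k ≤ 1) : √((∑ k, f k) / n) ≤ 1 := by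
    refine Real.sqrt_le_one.2 ((div_le_one hn').2 ?_)
    simpa using sum_le_sum fun k (_ : k ∈ univ) => hf k
  have hA := hmean (hE.map_leftMismatch_mul_self_le_one (h := h) (by omega))
  have hB := hmean (hE.map_rightMatch_mul_self_le_one (σ := σ) (h := h) (by omega))
  have hbound := mul_le_mul_of_nonneg_left (mul_le_one₀ hA (Real.sqrt_nonneg _) hB) hlam
  linarith [(abs_le.1 hmixE).1]

theorem map_leftMismatch_mul_map_rightMatch_le (hone : E 1 = 1) (ℓ r : Fin n) :
    E (leftMismatch n d q h ℓ) * E (rightMatch n d q σ h r) ≤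
      E (leftMismatch n d q h ℓ * rightMatch n d q σ h r) +
        ∑ α, ∑ β, |E (ZL n d q ℓ α * ZR n d q σ r β) - E (ZL n d q ℓ α) * E (ZR n d q σ r β)| := by
  set Z := ZL n d q ℓ fun i => h (ℓ, i)
  set B := rightMatch n d q σ h r
  have hcov : E (leftMismatch n d q h ℓ) * E B - E (leftMismatch n d q h ℓ * B) =
      E (Z * B) - E Z * E B := by
    simp only [leftMismatch, sub_mul, one_mul, map_sub, hone]
    ring
  have hterm : |E (Z * B) - E Z * E B| ≤
      ∑ α, ∑ β, |E (ZL n d q ℓ α * ZR n d q σ r β) - E (ZL n d q ℓ α) * E (ZR n d q σ r β)| :=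
    (single_le_sum (f := fun β => |E (Z * ZR n d q σ r β) - E Z * E (ZR n d q σ r β)|)
      (fun _ _ => abs_nonneg _) (mem_univ fun j => h (σ.symm (r, j)))).trans
    (single_le_sum (f := fun α => ∑ β, |E (ZL n d q ℓ α * ZR n d q σ r β) -
      E (ZL n d q ℓ α) * E (ZR n d q σ r β)|)
      (fun _ _ => sum_nonneg fun _ _ => abs_nonneg _) (mem_univ fun i => h (ℓ, i)))
  linarith [le_abs_self (E (Z * B) - E Z * E B)]

theorem IsEtaGood.deltaLPE_mul_one_sub_deltaRPE_le {η : ℝ} (hgood : IsEtaGood n d q σ E η)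
    (hone : E 1 = 1) (hn : 1 ≤ n) :
    deltaLPE n d q E h * (1 - deltaRPE n d q σ E h) ≤
      (∑ ℓ, ∑ r, E (leftMismatch n d q h ℓ * rightMatch n d q σ h r)) / ((n : ℝ) * n) + η := by
  rw [deltaLPE_eq hone, deltaRPE_eq (by omega), sub_sub_cancel, div_mul_div_comm, sum_mul_sum]
  calc _ ≤ (∑ ℓ, ∑ r, (E (leftMismatch n d q h ℓ * rightMatch n d q σ h r) +
          ∑ α, ∑ β, |E (ZL n d q ℓ α * ZR n d q σ r β) -
            E (ZL n d q ℓ α) * E (ZR n d q σ r β)|)) / ((n : ℝ) * n) := by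
        gcongr with ℓ _ r _
        exact map_leftMismatch_mul_map_rightMatch_le hone ℓ r
    _ ≤ _ := by
        simp only [sum_add_distrib, add_div]
        exact (add_le_add_iff_left _).2 hgood

end Distance

theorem ael_pseudocodeword_distance_general (n d q t : ℕ) (hn : 1 ≤ n) (hd : 1 ≤ d)
    (lam δ₀ η : ℝ) (hlam : 0 ≤ lam) (hδ₀1 : δ₀ ≤ 1)
    (σ : Fin n × Fin d ≃ Fin n × Fin d) (hmix : IsMixing n d σ lam)
    (C₀ : Set (Fin d → Fin q))
    (hC₀ : ∀ u ∈ C₀, ∀ v ∈ C₀, u ≠ v → δ₀ * d ≤ (hammingDist u v : ℝ))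
    (htd : 4 * d ≤ t)
    (E : MvPolynomial ((Fin n × Fin d) × Fin q) ℝ →ₗ[ℝ] ℝ)
    (hE : IsAELPseudocodeword n d q t C₀ E) (hgood : IsEtaGood n d q σ E η)
    (h : Fin n × Fin d → Fin q)
    (hhL : ∀ ℓ : Fin n, (fun i => h (ℓ, i)) ∈ C₀)
    (hpos : 0 < deltaLPE n d q E h) :
    δ₀ - (lam + η) / deltaLPE n d q E h ≤ deltaRPE n d q σ E h := by
  have hcov := hgood.deltaLPE_mul_one_sub_deltaRPE_le (h := h) hE.1.1 hn
  have hmixing := hE.1.pairAverage_le_edgeAverage_add (h := h) hn htd hmix hlam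
  have hcode := hE.edgeAverage_le (σ := σ) hn hd htd hδ₀1 hC₀ hhL
  rw [sub_le_comm, le_div_iff₀ hpos]
  nlinarith

/-- **AEL distance amplification for `η`-good pseudocodewords.** If `Δ^L(Ẽ, h) > 0`, then
`Δ^R(Ẽ, h) ≥ δ₀ − (λ + η) / Δ^L(Ẽ, h)`. -/
theorem ael_pseudocodeword_distance (n d q t : ℕ) (hn : 1 ≤ n) (hd : 1 ≤ d) (hq : 2 ≤ q)
    (lam δ₀ η : ℝ) (hlam : 0 ≤ lam) (hη : 0 ≤ η) (hδ₀0 : 0 ≤ δ₀) (hδ₀1 : δ₀ ≤ 1)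
    (σ : Fin n × Fin d ≃ Fin n × Fin d) (hmix : IsMixing n d σ lam)
    (C₀ : Set (Fin d → Fin q))
    (hC₀ : ∀ u ∈ C₀, ∀ v ∈ C₀, u ≠ v → δ₀ * d ≤ (hammingDist u v : ℝ))
    (ht : Even t) (htd : 4 * d ≤ t)
    (E : MvPolynomial ((Fin n × Fin d) × Fin q) ℝ →ₗ[ℝ] ℝ)
    (hE : IsAELPseudocodeword n d q t C₀ E) (hgood : IsEtaGood n d q σ E η)
    (h : Fin n × Fin d → Fin q)
    (hhL : ∀ ℓ : Fin n, (fun i => h (ℓ, i)) ∈ C₀)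
    (hpos : 0 < deltaLPE n d q E h) :
    δ₀ - (lam + η) / deltaLPE n d q E h ≤ deltaRPE n d q σ E h :=
  ael_pseudocodeword_distance_general n d q t hn hd lam δ₀ η hlam hδ₀1 σ hmix C₀ hC₀ htd E hE hgood
    h hhL hpos
end
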